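/- arXiv:1101.3596 — 6 statements merged into one kernel-verified Lean document; each statement's English description precedes it below -/
import Mathlib

section
/- Let n ∈ ℕ, j ≤ n, and suppose A ⊆ ℝⁿ satisfies either A ∈ R(w,ρ0,fine;j) or A ∈ R(s,β,γ;j) for some β ∈ {∅, ρ, ρ0} and γ ∈ Δ := {fine} ∪ (0,1). Then there exist j-dimensional linear subspaces L_k ⊆ ℝⁿ and Lipschitz functions g_k : L_k → L_k^⊥ (k ∈ ℕ) such that A ⊆ ⋃_{k∈ℕ} graph(g_k); i.e. A is covered by countably many Lipschitz graphs over j-dimensional planes. -/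
open Metric Set MeasureTheory ENNReal NNReal

attribute [local instance] Classical.propDecidable

noncomputable section

namespace ReifenbergPaper

/-- The closed `r`-neighbourhood `E^r = {x : dist (x, E) ≤ r}` of `E ⊆ ℝⁿ`. -/
def nbhd {n : ℕ} (E : Set (EuclideanSpace ℝ (Fin n))) (r : ℝ) :
    Set (EuclideanSpace ℝ (Fin n)) :=
  {x | Metric.infDist x E ≤ r}

/-- The affine plane through `x` with direction the linear subspace `W`. -/
def affPlane {n : ℕ} (x : EuclideanSpace ℝ (Fin n))
    (W : Submodule ℝ (EuclideanSpace ℝ (Fin n))) : Set (EuclideanSpace ℝ (Fin n)) :=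
  {z | z - x ∈ W}

/-- `A ∈ R(w,∅,δ;j)`. -/
def RwEmpty {n : ℕ} (j : ℕ) (δ : ℝ) (A : Set (EuclideanSpace ℝ (Fin n))) : Prop :=
  ∀ y ∈ A, ∃ ρy > (0:ℝ), ∀ ρ ∈ Set.Ioc (0:ℝ) ρy,
    ∃ W : Submodule ℝ (EuclideanSpace ℝ (Fin n)), Module.finrank ℝ W = j ∧
      Metric.closedBall y ρ ∩ A ⊆ nbhd (affPlane y W) (δ * ρ)

/-- `A ∈ R(w,ρ,δ;j)`. -/
def RwRho {n : ℕ} (j : ℕ) (δ : ℝ) (A : Set (EuclideanSpace ℝ (Fin n))) : Prop :=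
  ∀ y ∈ A, ∃ ρy > (0:ℝ), ∀ x ∈ Metric.closedBall y ρy ∩ A, ∀ ρ ∈ Set.Ioc (0:ℝ) ρy,
    ∃ W : Submodule ℝ (EuclideanSpace ℝ (Fin n)), Module.finrank ℝ W = j ∧
      Metric.closedBall x ρ ∩ A ⊆ nbhd (affPlane x W) (δ * ρ)

/-- `A ∈ R(w,ρ0,δ;j)`. -/
def RwRho0 {n : ℕ} (j : ℕ) (δ : ℝ) (A : Set (EuclideanSpace ℝ (Fin n))) : Prop :=
  ∃ ρ0 > (0:ℝ), (∃ c, A ⊆ Metric.closedBall c ρ0) ∧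
    ∀ y ∈ A, ∀ ρ ∈ Set.Ioc (0:ℝ) ρ0,
      ∃ W : Submodule ℝ (EuclideanSpace ℝ (Fin n)), Module.finrank ℝ W = j ∧
        Metric.closedBall y ρ ∩ A ⊆ nbhd (affPlane y W) (δ * ρ)

/-- `A ∈ R(s,∅,δ;j)`. -/
def RsEmpty {n : ℕ} (j : ℕ) (δ : ℝ) (A : Set (EuclideanSpace ℝ (Fin n))) : Prop :=
  ∀ y ∈ A, ∃ ρy > (0:ℝ), ∃ W : Submodule ℝ (EuclideanSpace ℝ (Fin n)),
    Module.finrank ℝ W = j ∧ ∀ ρ ∈ Set.Ioc (0:ℝ) ρy,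
      Metric.closedBall y ρ ∩ A ⊆ nbhd (affPlane y W) (δ * ρ)

/-- `A ∈ R(s,ρ,δ;j)`. -/
def RsRho {n : ℕ} (j : ℕ) (δ : ℝ) (A : Set (EuclideanSpace ℝ (Fin n))) : Prop :=
  ∀ y ∈ A, ∃ ρy > (0:ℝ), ∃ W : Submodule ℝ (EuclideanSpace ℝ (Fin n)),
    Module.finrank ℝ W = j ∧
    ∀ x ∈ Metric.closedBall y ρy ∩ A, ∀ ρ ∈ Set.Ioc (0:ℝ) ρy,
      Metric.closedBall x ρ ∩ A ⊆ nbhd (affPlane x W) (δ * ρ)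

/-- `A ∈ R(s,ρ0,δ;j)`. -/
def RsRho0 {n : ℕ} (j : ℕ) (δ : ℝ) (A : Set (EuclideanSpace ℝ (Fin n))) : Prop :=
  ∃ ρ0 > (0:ℝ), (∃ c, A ⊆ Metric.closedBall c ρ0) ∧
    ∃ W : Submodule ℝ (EuclideanSpace ℝ (Fin n)), Module.finrank ℝ W = j ∧
      ∀ x ∈ A, ∀ ρ ∈ Set.Ioc (0:ℝ) ρ0,
        Metric.closedBall x ρ ∩ A ⊆ nbhd (affPlane x W) (δ * ρ)

/-- The weak/strong parameter `α`. -/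
inductive Alpha | w | s

/-- The uniformity parameter `β ∈ {∅, ρ, ρ0}`. -/
inductive Beta | none | rho | rho0

/-- `A ∈ R(α,β,δ;j)` for a fixed approximation constant `δ`. -/
def RDelta {n : ℕ} (α : Alpha) (β : Beta) (j : ℕ) (δ : ℝ)
    (A : Set (EuclideanSpace ℝ (Fin n))) : Prop :=
  match α, β with
  | .w, .none => RwEmpty j δ A
  | .w, .rho  => RwRho j δ A
  | .w, .rho0 => RwRho0 j δ A
  | .s, .none => RsEmpty j δ A
  | .s, .rho  => RsRho j δ A
  | .s, .rho0 => RsRho0 j δ A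

/-- `A ∈ R(α,β,γ;j)` where `γ : Option ℝ`, with `Option.none` denoting the fine
property (`δ`-approximation for every `δ ∈ (0,1)`) and `Option.some δ` denoting the
`δ`-approximation property. -/
def RGamma {n : ℕ} (α : Alpha) (β : Beta) (j : ℕ) (γ : Option ℝ)
    (A : Set (EuclideanSpace ℝ (Fin n))) : Prop :=
  match γ with
  | Option.none => ∀ δ ∈ Set.Ioo (0:ℝ) 1, RDelta α β j δ A
  | Option.some δ => RDelta α β j δ A

/-- `γ ∈ Δ := {fine} ∪ (0,1)`. -/
def memDelta (γ : Option ℝ) : Prop :=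
  γ = Option.none ∨ ∃ d ∈ Set.Ioo (0:ℝ) 1, γ = Option.some d

/-- The graph `{x + g x : x ∈ W}` of a function `g : W → Wᗮ`. -/
def lipGraph {n : ℕ} (W : Submodule ℝ (EuclideanSpace ℝ (Fin n)))
    (g : W → Wᗮ) : Set (EuclideanSpace ℝ (Fin n)) :=
  {p | ∃ x : W, p = (x : EuclideanSpace ℝ (Fin n)) + (g x : EuclideanSpace ℝ (Fin n))}

/-- `N_ε(E)`: the smallest number of sets of diameter at most `ε` needed to cover `E`,
as an element of `ℝ≥0∞` (`⊤` if no finite cover exists). -/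
def coverNum {n : ℕ} (E : Set (EuclideanSpace ℝ (Fin n))) (ε : ℝ) : ℝ≥0∞ :=
  ⨅ (s : Finset (Set (EuclideanSpace ℝ (Fin n)))) (_ : E ⊆ ⋃ t ∈ s, t)
    (_ : ∀ t ∈ s, Metric.diam t ≤ ε), (s.card : ℝ≥0∞)

/-- Upper Minkowski (box-counting) dimension
`limsup_{ε → 0⁺} log N_ε(E) / (- log ε)`, with the convention that the empty set
has dimension `0`. -/
def upperMinkDim {n : ℕ} (E : Set (EuclideanSpace ℝ (Fin n))) : ℝ :=
  if E = ∅ then 0 else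
    Filter.limsup (fun ε : ℝ => Real.log (coverNum E ε).toReal / (-Real.log ε))
      (nhdsWithin 0 (Set.Ioi 0))

/-- Lower Minkowski (box-counting) dimension
`liminf_{ε → 0⁺} log N_ε(E) / (- log ε)`, with the convention that the empty set
has dimension `0`. -/
def lowerMinkDim {n : ℕ} (E : Set (EuclideanSpace ℝ (Fin n))) : ℝ :=
  if E = ∅ then 0 else
    Filter.liminf (fun ε : ℝ => Real.log (coverNum E ε).toReal / (-Real.log ε))
      (nhdsWithin 0 (Set.Ioi 0))

/-- Packing dimension:
`dim_P A = inf { sup_i dim̄_M A_i : A = ⋃ i, A_i, each A_i bounded }`. -/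
def packDim {n : ℕ} (A : Set (EuclideanSpace ℝ (Fin n))) : ℝ :=
  sInf {d : ℝ | ∃ F : ℕ → Set (EuclideanSpace ℝ (Fin n)),
    A = ⋃ i, F i ∧ (∀ i, Bornology.IsBounded (F i)) ∧ ∀ i, upperMinkDim (F i) ≤ d}

/-- `D` is an `η`-packing of `E`: a countable collection of pairwise disjoint closed
balls centred at points of `E` with (positive) radii at most `η`, coded as a set of
(centre, radius) pairs. -/
def IsPacking {n : ℕ} (η : ℝ) (E : Set (EuclideanSpace ℝ (Fin n)))
    (D : Set (EuclideanSpace ℝ (Fin n) × ℝ)) : Prop :=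
  D.Countable ∧ (∀ p ∈ D, p.1 ∈ E ∧ 0 < p.2 ∧ p.2 ≤ η) ∧
    D.Pairwise fun p q => Disjoint (Metric.closedBall p.1 p.2) (Metric.closedBall q.1 q.2)

/-- The packing premeasure `P^s_η(E) = sup { Σ_i (diam B_i)^s }` over `η`-packings. -/
def packPre {n : ℕ} (s : ℕ) (η : ℝ) (E : Set (EuclideanSpace ℝ (Fin n))) : ℝ≥0∞ :=
  ⨆ (D : Set (EuclideanSpace ℝ (Fin n) × ℝ)) (_ : IsPacking η E D),
    ∑' p : D, (ENNReal.ofReal (Metric.diam (Metric.closedBall p.1.1 p.1.2))) ^ s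

/-- `P^s_0(E) = lim_{η ↓ 0} P^s_η(E) = inf_{η > 0} P^s_η(E)`. -/
def packPre0 {n : ℕ} (s : ℕ) (E : Set (EuclideanSpace ℝ (Fin n))) : ℝ≥0∞ :=
  ⨅ (η : ℝ) (_ : 0 < η), packPre s η E

/-- The `s`-dimensional packing measure
`P^s(E) = inf { Σ_i P^s_0(E_i) : E ⊆ ⋃ i, E_i }`. -/
def packMeasure {n : ℕ} (s : ℕ) (E : Set (EuclideanSpace ℝ (Fin n))) : ℝ≥0∞ :=
  ⨅ (F : ℕ → Set (EuclideanSpace ℝ (Fin n))) (_ : E ⊆ ⋃ i, F i), ∑' i, packPre0 s (F i)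

/-- `A` is `(μ, j)`-rectifiable: `A ⊆ M₀ ∪ ⋃ i, f i '' ℝ^j` with `μ M₀ = 0` and each
`f i` Lipschitz. -/
def Rectifiable {n : ℕ} (μ : Set (EuclideanSpace ℝ (Fin n)) → ℝ≥0∞) (j : ℕ)
    (A : Set (EuclideanSpace ℝ (Fin n))) : Prop :=
  ∃ (M₀ : Set (EuclideanSpace ℝ (Fin n)))
    (f : ℕ → EuclideanSpace ℝ (Fin j) → EuclideanSpace ℝ (Fin n)),
    μ M₀ = 0 ∧ (∀ i, ∃ K : ℝ≥0, LipschitzWith K (f i)) ∧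
      A ⊆ M₀ ∪ ⋃ i, Set.range (f i)

/-- `A` has weakly locally finite `μ` measure. -/
def WeaklyLocFinite {n : ℕ} (μ : Set (EuclideanSpace ℝ (Fin n)) → ℝ≥0∞)
    (A : Set (EuclideanSpace ℝ (Fin n))) : Prop :=
  ∀ y ∈ A, ∃ ρ > (0:ℝ), μ (Metric.closedBall y ρ ∩ A) < ⊤

/-- `A` has strongly locally finite `μ` measure. -/
def StronglyLocFinite {n : ℕ} (μ : Set (EuclideanSpace ℝ (Fin n)) → ℝ≥0∞)
    (A : Set (EuclideanSpace ℝ (Fin n))) : Prop :=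
  ∀ K : Set (EuclideanSpace ℝ (Fin n)), IsCompact K → μ (K ∩ A) < ⊤

/-- `A` satisfies the two-sided `wρ j` property with respect to `ε`. -/
def TwoSidedWRho {n : ℕ} (j : ℕ) (ε : ℝ) (A : Set (EuclideanSpace ℝ (Fin n))) : Prop :=
  ∀ y ∈ A, ∃ ρy > (0:ℝ), ∀ x ∈ A ∩ Metric.closedBall y ρy, ∀ ρ ∈ Set.Ioc (0:ℝ) ρy,
    ∃ (x0 : EuclideanSpace ℝ (Fin n)) (W : Submodule ℝ (EuclideanSpace ℝ (Fin n))),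
      Module.finrank ℝ W = j ∧
      Metric.hausdorffDist (A ∩ Metric.closedBall x ρ)
        (affPlane x0 W ∩ Metric.closedBall x ρ) < ε * ρ

/-- The set `N_j = ⋃_{i ≥ 1} {i⁻¹} × [0,1]^j ⊆ ℝ^{j+1}`. -/
def NSet (j : ℕ) : Set (EuclideanSpace ℝ (Fin (j+1))) :=
  {x | ∃ i : ℕ, 1 ≤ i ∧ x 0 = ((i : ℝ))⁻¹ ∧ ∀ k : Fin (j+1), k ≠ 0 → x k ∈ Set.Icc (0:ℝ) 1}

/-!
If each point `x` of `A` has a `j`-plane `W` and a radius `r` such that `A ∩ B_r(x)` lies in the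
cone `{y : |Q_W (y - x)| ≤ c |y - x|}` for one constant `c < 1` (`Q_W` the orthogonal projection
onto `Wᗮ`), then `A` is covered by countably many Lipschitz graphs: sort the points by a plane `V`
from a countable dense family of `j`-planes with `Q_V` close to `Q_W`, by a scale `1/(m+1) < r` and
by a small ball containing `x`. Two points of one such piece see each other inside a cone of
aperture `< 1` around `V`, so the piece is the graph over `V` of a Lipschitz function, which extends
to all of `V`.

Every strong Reifenberg property gives these cones with `c = δ`. For the fine weak `ρ₀` property,
`ρ₀` exceeds half the diameter of `A` for every `δ`, so at the fixed scale `ρ = diam A / 2` the set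
`A ∩ B_ρ(x) - x` is `δρ`-close to a `j`-plane for every `δ`; as linear independence is an open
condition, it spans at most `j` dimensions, and the cones have aperture `0`.
-/

open Module Submodule

theorem exists_le_finrank_eq {K M : Type*} [DivisionRing K] [AddCommGroup M] [Module K M]
    [Module.Finite K M] {V : Submodule K M} {j : ℕ} (hV : finrank K V ≤ j)
    (hj : j ≤ finrank K M) : ∃ W : Submodule K M, V ≤ W ∧ finrank K W = j := by
  induction j, hV using Nat.le_induction with
  | base => exact ⟨V, le_rfl, rfl⟩
  | succ j _ ih =>
    obtain ⟨W, hVW, hW⟩ := ih (by omega)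
    have hWtop : W < ⊤ := lt_top_iff_ne_top.2 fun h => by rw [h, finrank_top] at hW; omega
    obtain ⟨v, -, hv⟩ := SetLike.exists_of_lt hWtop
    exact ⟨W ⊔ span K {v}, hVW.trans le_sup_left, by rw [finrank_sup_span_singleton hv, hW]⟩

theorem exists_seq_forall_exists_dist_lt {X M : Type*} [Nonempty X] [PseudoMetricSpace M]
    [SecondCountableTopology M] (φ : X → M) :
    ∃ u : ℕ → X, ∀ x, ∀ ε > 0, ∃ i, dist (φ x) (φ (u i)) < ε := by
  obtain ⟨v, hv⟩ := TopologicalSpace.exists_dense_seq (range φ)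
  choose u hu using fun i => (v i).2
  refine ⟨u, fun x ε hε => ?_⟩
  obtain ⟨i, hi⟩ := hv.exists_dist_lt ⟨φ x, mem_range_self x⟩ hε
  exact ⟨i, by rwa [hu]⟩

section ConeGeometry

variable {E : Type*} [NormedAddCommGroup E] [InnerProductSpace ℝ E] [FiniteDimensional ℝ E]

theorem exists_lipschitz_graph_of_pairwise_cone (V : Submodule ℝ E) {S : Set E} {K : ℝ≥0}
    (hS : ∀ x ∈ S, ∀ y ∈ S, ‖Vᗮ.starProjection (x - y)‖ ≤ K * ‖V.starProjection (x - y)‖) :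
    ∃ g : V → Vᗮ, (∃ K' : ℝ≥0, LipschitzWith K' g) ∧ ∀ x ∈ S, ∃ v : V, x = v + g v := by
  set P := V.orthogonalProjectionOnto
  have hinj : InjOn P S := by
    intro x hx y hy hxy
    have hP : V.starProjection (x - y) = 0 := by
      rw [starProjection_apply, map_sub, hxy, sub_self, ZeroMemClass.coe_zero]
    have hQ : Vᗮ.starProjection (x - y) = 0 :=
      norm_le_zero_iff.1 (by simpa [hP] using hS x hx y hy)
    rw [← sub_eq_zero, ← V.starProjection_add_starProjection_orthogonal (x - y), hP, hQ, add_zero]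
  set F : V → Vᗮ := fun v => Vᗮ.orthogonalProjectionOnto (Function.invFunOn P S v)
  have hF : ∀ x ∈ S, F (P x) = Vᗮ.orthogonalProjectionOnto x := fun x hx => by
    simp only [F, hinj.leftInvOn_invFunOn hx]
  have hFlip : LipschitzOnWith K F (P '' S) := by
    refine LipschitzOnWith.of_dist_le_mul ?_
    rintro _ ⟨x, hx, rfl⟩ _ ⟨y, hy, rfl⟩
    rw [hF x hx, hF y hy, dist_eq_norm, dist_eq_norm, ← map_sub, ← map_sub]
    exact hS x hx y hy
  obtain ⟨g, hg, hFg⟩ := hFlip.extend_finite_dimension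
  refine ⟨g, ⟨_, hg⟩, fun x hx => ⟨P x, ?_⟩⟩
  rw [← hFg (mem_image_of_mem P hx), hF x hx]
  exact (V.starProjection_add_starProjection_orthogonal x).symm

theorem norm_starProjection_orthogonal_le_of_le_mul {V : Submodule ℝ E} {c : ℝ} (hc0 : 0 ≤ c)
    (hc1 : c < 1) {v : E} (h : ‖Vᗮ.starProjection v‖ ≤ c * ‖v‖) :
    ‖Vᗮ.starProjection v‖ ≤ c / (1 - c) * ‖V.starProjection v‖ := by
  have hv : ‖v‖ ≤ ‖V.starProjection v‖ + ‖Vᗮ.starProjection v‖ := by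
    conv_lhs => rw [← V.starProjection_add_starProjection_orthogonal v]
    exact norm_add_le _ _
  rw [div_mul_eq_mul_div, le_div_iff₀ (sub_pos.2 hc1)]
  nlinarith [mul_le_mul_of_nonneg_left hv hc0]

def ConeAt (c r : ℝ) (W : Submodule ℝ E) (x : E) (A : Set E) : Prop :=
  ∀ y ∈ A, dist y x ≤ r → ‖Wᗮ.starProjection (y - x)‖ ≤ c * dist y x

def ConeCondition (j : ℕ) (c : ℝ) (A : Set E) : Prop :=
  ∀ x ∈ A, ∃ r > 0, ∃ W : Submodule ℝ E, finrank ℝ W = j ∧ ConeAt c r W x A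

variable {c r τ : ℝ} {V W : Submodule ℝ E} {x : E} {A : Set E}

theorem ConeAt.mono_radius {r' : ℝ} (h : ConeAt c r W x A) (hr : r' ≤ r) : ConeAt c r' W x A :=
  fun y hy hyx => h y hy (hyx.trans hr)

theorem ConeAt.of_norm_sub_le (h : ConeAt c r W x A)
    (hVW : ‖Vᗮ.starProjection - Wᗮ.starProjection‖ ≤ τ) : ConeAt (c + τ) r V x A := by
  intro y hy hyx
  calc ‖Vᗮ.starProjection (y - x)‖
      ≤ ‖Wᗮ.starProjection (y - x)‖ + ‖(Vᗮ.starProjection - Wᗮ.starProjection) (y - x)‖ :=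
        norm_le_norm_add_norm_sub' _ _
    _ ≤ c * dist y x + τ * dist y x := by
        gcongr
        · exact h y hy hyx
        · rw [dist_eq_norm]
          exact (ContinuousLinearMap.le_opNorm _ _).trans (by gcongr)
    _ = (c + τ) * dist y x := by ring

theorem exists_lipschitz_graph_of_coneAt (hc0 : 0 ≤ c) (hc1 : c < 1) (V : Submodule ℝ E)
    (z : E) (r : ℝ) :
    ∃ g : V → Vᗮ, (∃ K : ℝ≥0, LipschitzWith K g) ∧
      ∀ x ∈ closedBall z (r / 2) ∩ A, ConeAt c r V x A → ∃ v : V, x = v + g v := by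
  obtain ⟨g, hg, hgraph⟩ := exists_lipschitz_graph_of_pairwise_cone V
    (S := {x ∈ closedBall z (r / 2) ∩ A | ConeAt c r V x A})
    (K := ⟨c / (1 - c), div_nonneg hc0 (sub_nonneg.2 hc1.le)⟩) (by
      rintro x ⟨⟨hxz, hxA⟩, -⟩ y ⟨⟨hyz, -⟩, hy⟩
      have hxy : dist x y ≤ r := by
        linarith [dist_triangle_right x y z, mem_closedBall.1 hxz, mem_closedBall.1 hyz]
      refine norm_starProjection_orthogonal_le_of_le_mul hc0 hc1 ?_
      rw [← dist_eq_norm]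
      exact hy x hxA hxy)
  exact ⟨g, hg, fun x hx hxV => hgraph x ⟨hx, hxV⟩⟩

theorem ConeCondition.exists_lipschitz_graph_cover {j : ℕ} (hj : j ≤ finrank ℝ E)
    (hc0 : 0 ≤ c) (hc1 : c < 1) (hA : ConeCondition j c A) :
    ∃ (W : ℕ → Submodule ℝ E) (g : ∀ k, W k → (W k)ᗮ), (∀ k, finrank ℝ (W k) = j) ∧
      (∀ k, ∃ K : ℝ≥0, LipschitzWith K (g k)) ∧
      A ⊆ ⋃ k, {p | ∃ v : W k, p = v + g k v} := by
  set τ := (1 - c) / 2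
  have hτ : 0 < τ := by simp only [τ]; linarith
  obtain ⟨W₀, -, hW₀⟩ := exists_le_finrank_eq (V := (⊥ : Submodule ℝ E)) (by simp) hj
  have : Nonempty {W : Submodule ℝ E // finrank ℝ W = j} := ⟨⟨W₀, hW₀⟩⟩
  obtain ⟨V, hV⟩ := exists_seq_forall_exists_dist_lt
    fun W : {W : Submodule ℝ E // finrank ℝ W = j} => (W : Submodule ℝ E)ᗮ.starProjection
  obtain ⟨z, hz⟩ := TopologicalSpace.exists_dense_seq E
  choose g hg hgraph using fun p : ℕ × ℕ × ℕ =>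
    exists_lipschitz_graph_of_coneAt (A := A) (by positivity : 0 ≤ c + τ)
      (by simp only [τ]; linarith) (V p.1) (z p.2.2) (1 / (p.2.1 + 1))
  obtain ⟨e⟩ : Nonempty (ℕ ≃ ℕ × ℕ × ℕ) := ⟨(Denumerable.eqv _).symm⟩
  refine ⟨fun k => V (e k).1, fun k => g (e k), fun k => (V _).2, fun k => hg _, ?_⟩
  intro x hx
  obtain ⟨r, hr, W, hW, hxW⟩ := hA x hx
  obtain ⟨m, hm⟩ := exists_nat_one_div_lt hr
  obtain ⟨i, hi⟩ := hV ⟨W, hW⟩ τ hτ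
  obtain ⟨l, hl⟩ := hz.exists_dist_lt x (half_pos (Nat.one_div_pos_of_nat (n := m)))
  have hcone : ConeAt (c + τ) (1 / (m + 1)) (V i) x A := by
    refine (hxW.mono_radius hm.le).of_norm_sub_le ?_
    rw [← dist_eq_norm, dist_comm]
    exact hi.le
  obtain ⟨k, hk⟩ := e.surjective (i, m, l)
  have hgraph_k := hgraph (i, m, l) x ⟨mem_closedBall.2 hl.le, hx⟩ hcone
  rw [← hk] at hgraph_k
  exact mem_iUnion.2 ⟨k, hgraph_k⟩

theorem finrank_span_le_of_forall_exists_near {s : Set E} {j : ℕ}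
    (h : ∀ ε > 0, ∃ W : Submodule ℝ E, finrank ℝ W = j ∧ ∀ v ∈ s, ‖Wᗮ.starProjection v‖ ≤ ε) :
    finrank ℝ (span ℝ s) ≤ j := by
  obtain ⟨b, hbs, hspan, hb⟩ := exists_linearIndependent ℝ s
  have : Fintype b := hb.setFinite.fintype
  obtain ⟨ε, hε, hball⟩ := Metric.isOpen_iff.1 isOpen_setOfPred_linearIndependent _
    (show (Subtype.val : b → E) ∈ {f | LinearIndependent ℝ f} from hb)
  obtain ⟨W, hW, hWs⟩ := h (ε / 2) (half_pos hε)
  have hli : LinearIndependent ℝ fun v : b => W.starProjection v := by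
    refine hball ((dist_pi_lt_iff hε).2 fun v => ?_)
    rw [dist_eq_norm, ← norm_neg, neg_sub, ← starProjection_orthogonal_val]
    exact (hWs v (hbs v.2)).trans_lt (half_lt_self hε)
  have hcard := (LinearIndependent.of_comp W.subtype
    (v := fun v : b => (⟨W.starProjection v, W.starProjection_apply_mem v⟩ : W)) hli)
    |>.fintype_card_le_finrank
  rw [← hspan]
  exact (finrank_span_le_card _).trans (by rw [Set.toFinset_card, ← hW]; exact hcard)

end ConeGeometry

section ReifenbergToCone

variable {n j : ℕ} {δ : ℝ} {A : Set (EuclideanSpace ℝ (Fin n))}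

theorem norm_starProjection_orthogonal_sub_le_of_mem_nbhd {x y : EuclideanSpace ℝ (Fin n)}
    {W : Submodule ℝ (EuclideanSpace ℝ (Fin n))} {r : ℝ} (h : y ∈ nbhd (affPlane x W) r) :
    ‖Wᗮ.starProjection (y - x)‖ ≤ r := by
  refine le_trans ((Metric.le_infDist ⟨x, by simp [affPlane]⟩).2 fun z hz => ?_) h
  calc ‖Wᗮ.starProjection (y - x)‖ = ‖Wᗮ.starProjection (y - z)‖ := by
        rw [show y - x = (y - z) + (z - x) by abel, map_add,
          starProjection_orthogonal_apply_eq_zero (show z - x ∈ W from hz), add_zero]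
    _ ≤ ‖y - z‖ := norm_starProjection_apply_le _ _
    _ = dist y z := (dist_eq_norm _ _).symm

theorem RsEmpty.coneCondition (h : RsEmpty j δ A) : ConeCondition j δ A := by
  intro x hx
  obtain ⟨r, hr, W, hW, hsub⟩ := h x hx
  refine ⟨r, hr, W, hW, fun y hy hyx => ?_⟩
  rcases eq_or_ne y x with rfl | hne
  · simp
  · exact norm_starProjection_orthogonal_sub_le_of_mem_nbhd
      (hsub (dist y x) ⟨dist_pos.2 hne, hyx⟩ ⟨mem_closedBall.2 le_rfl, hy⟩)

theorem RsRho.rsEmpty (h : RsRho j δ A) : RsEmpty j δ A := fun y hy =>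
  let ⟨r, hr, W, hW, hsub⟩ := h y hy
  ⟨r, hr, W, hW, hsub y ⟨mem_closedBall_self hr.le, hy⟩⟩

theorem RsRho0.rsEmpty (h : RsRho0 j δ A) : RsEmpty j δ A := fun y hy =>
  let ⟨ρ₀, hρ₀, _, W, hW, hsub⟩ := h
  ⟨ρ₀, hρ₀, W, hW, hsub y hy⟩

theorem coneCondition_of_RDelta_s : ∀ {β : Beta}, RDelta .s β j δ A → ConeCondition j δ A
  | .none, h => RsEmpty.coneCondition h
  | .rho, h => (RsRho.rsEmpty h).coneCondition
  | .rho0, h => (RsRho0.rsEmpty h).coneCondition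

theorem RGamma.exists_RDelta {α : Alpha} {β : Beta} {γ : Option ℝ} (h : RGamma α β j γ A)
    (hγ : memDelta γ) : ∃ δ ∈ Ioo (0 : ℝ) 1, RDelta α β j δ A := by
  rcases hγ with rfl | ⟨δ, hδ, rfl⟩
  · exact ⟨1 / 2, ⟨by norm_num, by norm_num⟩, h _ ⟨by norm_num, by norm_num⟩⟩
  · exact ⟨δ, hδ, h⟩

theorem exists_radius_finrank_span_sub_le (hA : ∀ δ ∈ Ioo (0 : ℝ) 1, RwRho0 j δ A)
    {x : EuclideanSpace ℝ (Fin n)} (hx : x ∈ A) :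
    ∃ r > 0, finrank ℝ (span ℝ ((· - x) '' (closedBall x r ∩ A))) ≤ j := by
  rcases A.subsingleton_or_nontrivial with hA1 | ⟨a, ha, b, hb, hab⟩
  · refine ⟨1, one_pos, (Submodule.finrank_mono (t := ⊥) (span_le.2 ?_)).trans (by simp)⟩
    rintro _ ⟨y, ⟨-, hy⟩, rfl⟩
    simp [hA1 hy hx]
  set ρ := dist a b / 2
  have hρ : 0 < ρ := half_pos (dist_pos.2 hab)
  refine ⟨ρ, hρ, finrank_span_le_of_forall_exists_near fun ε hε => ?_⟩
  set δ := min (ε / ρ) (1 / 2)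
  have hδ : δ ∈ Ioo (0 : ℝ) 1 := ⟨by positivity, (min_le_right _ _).trans_lt (by norm_num)⟩
  obtain ⟨ρ₀, -, ⟨z, hz⟩, hflat⟩ := hA δ hδ
  have hρρ₀ : ρ ≤ ρ₀ := by
    simp only [ρ]
    linarith [dist_triangle_right a b z, mem_closedBall.1 (hz ha), mem_closedBall.1 (hz hb)]
  obtain ⟨W, hW, hsub⟩ := hflat x hx ρ ⟨hρ, hρρ₀⟩
  refine ⟨W, hW, ?_⟩
  rintro _ ⟨y, hy, rfl⟩
  calc ‖Wᗮ.starProjection (y - x)‖ ≤ δ * ρ :=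
        norm_starProjection_orthogonal_sub_le_of_mem_nbhd (hsub hy)
    _ ≤ ε / ρ * ρ := by gcongr; exact min_le_left _ _
    _ = ε := div_mul_cancel₀ _ hρ.ne'

theorem coneCondition_zero_of_fine_RwRho0 (hj : j ≤ n)
    (hA : ∀ δ ∈ Ioo (0 : ℝ) 1, RwRho0 j δ A) : ConeCondition j 0 A := by
  intro x hx
  obtain ⟨r, hr, hspan⟩ := exists_radius_finrank_span_sub_le hA hx
  obtain ⟨W, hspanW, hW⟩ := exists_le_finrank_eq hspan (by rwa [finrank_euclideanSpace_fin])
  refine ⟨r, hr, W, hW, fun y hy hyx => ?_⟩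
  have hyW : y - x ∈ W := hspanW (subset_span ⟨y, ⟨mem_closedBall.2 hyx, hy⟩, rfl⟩)
  simp [starProjection_orthogonal_apply_eq_zero hyW]

end ReifenbergToCone

/-- a set with the `ρ0`-uniform fine weak property or any strong
Reifenberg property is covered by countably many Lipschitz graphs over
`j`-dimensional planes. -/
theorem lipschitz_graph_cover (n j : ℕ) (hj : j ≤ n) (A : Set (EuclideanSpace ℝ (Fin n)))
    (hA : RGamma .w .rho0 j Option.none A ∨
      ∃ (β : Beta) (γ : Option ℝ), memDelta γ ∧ RGamma .s β j γ A) :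
    ∃ (W : ℕ → Submodule ℝ (EuclideanSpace ℝ (Fin n))) (g : ∀ k, (W k) → (W k)ᗮ),
      (∀ k, Module.finrank ℝ (W k) = j) ∧
      (∀ k, ∃ K : ℝ≥0, LipschitzWith K (g k)) ∧
      A ⊆ ⋃ k, lipGraph (W k) (g k) := by
  obtain ⟨c, hc0, hc1, hcone⟩ : ∃ c : ℝ, 0 ≤ c ∧ c < 1 ∧ ConeCondition j c A := by
    rcases hA with hweak | ⟨β, γ, hγ, hstrong⟩
    · exact ⟨0, le_rfl, one_pos, coneCondition_zero_of_fine_RwRho0 hj hweak⟩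
    · obtain ⟨δ, hδ, hβ⟩ := hstrong.exists_RDelta hγ
      exact ⟨δ, hδ.1.le, hδ.2, coneCondition_of_RDelta_s hβ⟩
  exact hcone.exists_lipschitz_graph_cover (by rwa [finrank_euclideanSpace_fin]) hc0 hc1

end ReifenbergPaper
end
end

section
/- Let n ∈ ℕ, j ≤ n, and suppose A ⊆ ℝⁿ satisfies either A ∈ R(w,ρ0,fine;j) or A ∈ R(s,ρ0,γ;j) for some γ ∈ Δ := {fine} ∪ (0,1). Then there exist Q ∈ ℕ, j-dimensional linear subspaces L_1, …, L_Q ⊆ ℝⁿ and Lipschitz functions g_k : L_k → L_k^⊥ (1 ≤ k ≤ Q) such that A ⊆ ⋃_{k=1}^{Q} graph(g_k); i.e. a set satisfying a ρ0-uniform fine weak or ρ0-uniform strong Reifenberg property is covered by finitely many Lipschitz graphs over j-dimensional planes. -/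
/-!
In both cases `A` is bounded and satisfies a uniform cone condition: there are `r > 0` and `K`
such that for every `y ∈ A` some `j`-plane `W` has `‖P_{Wᗮ}(x - z)‖ ≤ K ‖P_W(x - z)‖` for all
`x, z ∈ A ∩ B_r(y)`, so that `A ∩ B_r(y)` is the graph of a `K`-Lipschitz map over part of `W`.
In the strong case `W` is the fixed plane `L`, and `δ`-flatness with `δ < 1` gives
`K = δ / (1 - δ)`. In the fine weak case `r = dist(a, b) / 2`, for two points `a ≠ b` of `A`,
is an admissible scale for every `δ` (as `A` lies in a ball of radius `ρ0(δ)`), so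
`A ∩ B_r(y)` lies `δ r`-close to a `j`-plane through `y` for every `δ`; since linear
independence is an open condition, it then lies in a `j`-plane (`K = 0`). Finitely many balls
`B_r(y)` cover the bounded set `A`, and each graph map extends to a Lipschitz map on all of `W`
(finite-dimensional Lipschitz extension).
-/

open Metric Set MeasureTheory ENNReal NNReal

attribute [local instance] Classical.propDecidable

noncomputable section

section LinearAlgebra

variable {K V : Type*} [Field K] [AddCommGroup V] [Module K V] [FiniteDimensional K V]

theorem Submodule.exists_le_finrank_eq (U : Submodule K V) {j : ℕ}
    (hUj : Module.finrank K U ≤ j) (hj : j ≤ Module.finrank K V) :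
    ∃ W : Submodule K V, U ≤ W ∧ Module.finrank K W = j := by
  obtain ⟨k, rfl⟩ := Nat.exists_eq_add_of_le hUj
  induction k generalizing U with
  | zero => exact ⟨U, le_rfl, rfl⟩
  | succ k ih =>
    obtain ⟨v, -, hv⟩ : ∃ v ∈ (⊤ : Submodule K V), v ∉ U :=
      SetLike.exists_of_lt (Submodule.lt_top_of_finrank_lt_finrank (by omega))
    have hrank := Submodule.finrank_sup_span_singleton hv
    obtain ⟨W, hUW, hW⟩ := ih (U ⊔ Submodule.span K {v}) (by omega) (by omega)
    exact ⟨W, le_sup_left.trans hUW, by omega⟩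

end LinearAlgebra

section Approximation

variable {E : Type*} [NormedAddCommGroup E] [NormedSpace ℝ E] [FiniteDimensional ℝ E]

theorem LinearIndependent.card_le_of_forall_approx {ι : Type*} [Fintype ι] {v : ι → E}
    (hv : LinearIndependent ℝ v) {j : ℕ}
    (happrox : ∀ ε > 0, ∃ W : Submodule ℝ E, Module.finrank ℝ W = j ∧
      ∀ i, ∃ w ∈ W, ‖v i - w‖ < ε) :
    Fintype.card ι ≤ j := by
  obtain ⟨ε, hε, hopen⟩ := Metric.eventually_nhds_iff.1 hv.eventually
  obtain ⟨W, rfl, hW⟩ := happrox ε hε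
  choose w hwW hwv using hW
  have hli : LinearIndependent ℝ (W.subtype ∘ fun i => (⟨w i, hwW i⟩ : W)) := by
    refine hopen ((dist_pi_lt_iff hε).2 fun i => ?_)
    simpa [dist_eq_norm, norm_sub_rev] using hwv i
  exact (LinearIndependent.of_comp _ hli).fintype_card_le_finrank

theorem finrank_span_le_of_forall_approx {S : Set E} {j : ℕ}
    (happrox : ∀ ε > 0, ∃ W : Submodule ℝ E, Module.finrank ℝ W = j ∧
      ∀ v ∈ S, ∃ w ∈ W, ‖v - w‖ < ε) :
    Module.finrank ℝ (Submodule.span ℝ S) ≤ j := by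
  obtain ⟨b, hbS, hspan, hli⟩ := exists_linearIndependent ℝ S
  have : Fintype b := @Fintype.ofFinite _ hli.finite
  rw [← hspan, finrank_span_set_eq_card hli, Set.toFinset_card]
  exact hli.card_le_of_forall_approx fun ε hε =>
    (happrox ε hε).imp fun _ ⟨hW, hS⟩ => ⟨hW, fun i => hS i (hbS i.2)⟩

theorem exists_finrank_eq_superset_of_forall_approx {S : Set E} {j : ℕ}
    (happrox : ∀ ε > 0, ∃ W : Submodule ℝ E, Module.finrank ℝ W = j ∧
      ∀ v ∈ S, ∃ w ∈ W, ‖v - w‖ < ε) :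
    ∃ U : Submodule ℝ E, Module.finrank ℝ U = j ∧ S ⊆ U := by
  obtain ⟨W, hW, -⟩ := happrox 1 one_pos
  obtain ⟨U, hSU, hU⟩ := (Submodule.span ℝ S).exists_le_finrank_eq
    (finrank_span_le_of_forall_approx happrox) (hW ▸ W.finrank_le)
  exact ⟨U, hU, Submodule.subset_span.trans hSU⟩

end Approximation

section LipschitzGraph

theorem exists_lipschitzWith_comp_eq_of_dist_le {α β γ : Type*} [PseudoMetricSpace α]
    [PseudoMetricSpace β] [NormedAddCommGroup γ] [NormedSpace ℝ γ] [FiniteDimensional ℝ γ]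
    {f : α → β} {u : α → γ} {S : Set α} {K : ℝ}
    (hS : ∀ x ∈ S, ∀ z ∈ S, dist (u x) (u z) ≤ K * dist (f x) (f z)) :
    ∃ g : β → γ, (∃ K' : ℝ≥0, LipschitzWith K' g) ∧ ∀ x ∈ S, g (f x) = u x := by
  rcases S.eq_empty_or_nonempty with rfl | ⟨x₀, -⟩
  · exact ⟨0, ⟨0, LipschitzWith.const 0⟩, by simp⟩
  have : Nonempty α := ⟨x₀⟩
  have hfactor : ∀ x ∈ S, u (Function.invFunOn f S (f x)) = u x := fun x hx => by
    have hfx : ∃ x' ∈ S, f x' = f x := ⟨x, hx, rfl⟩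
    have h := hS _ (Function.invFunOn_mem hfx) x hx
    rwa [Function.invFunOn_eq hfx, dist_self, mul_zero, dist_le_zero] at h
  have hlip : LipschitzOnWith K.toNNReal (u ∘ Function.invFunOn f S) (f '' S) := by
    refine LipschitzOnWith.of_dist_le' ?_
    rintro _ ⟨x, hx, rfl⟩ _ ⟨z, hz, rfl⟩
    simpa only [Function.comp, hfactor x hx, hfactor z hz] using hS x hx z hz
  obtain ⟨g, hg, hgu⟩ := hlip.extend_finite_dimension
  exact ⟨g, ⟨_, hg⟩, fun x hx => (hgu (mem_image_of_mem f hx)).symm.trans (hfactor x hx)⟩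

variable {E : Type*} [NormedAddCommGroup E] [InnerProductSpace ℝ E] [FiniteDimensional ℝ E]

theorem exists_lipschitz_graph_of_cone (W : Submodule ℝ E) {S : Set E} {K : ℝ}
    (hS : ∀ x ∈ S, ∀ z ∈ S, dist (Wᗮ.orthogonalProjectionOnto x) (Wᗮ.orthogonalProjectionOnto z) ≤
      K * dist (W.orthogonalProjectionOnto x) (W.orthogonalProjectionOnto z)) :
    ∃ g : W → Wᗮ, (∃ K' : ℝ≥0, LipschitzWith K' g) ∧ S ⊆ {p | ∃ x : W, p = x + g x} := by
  obtain ⟨g, hg, hgS⟩ := exists_lipschitzWith_comp_eq_of_dist_le hS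
  refine ⟨g, hg, fun z hz => ⟨W.orthogonalProjectionOnto z, ?_⟩⟩
  rw [hgS z hz]
  exact (W.starProjection_add_starProjection_orthogonal z).symm

end LipschitzGraph

theorem Bornology.IsBounded.exists_fin_cover_ball {α : Type*} [PseudoMetricSpace α]
    [ProperSpace α] {A : Set α} (hA : Bornology.IsBounded A) {r : ℝ} (hr : 0 < r) :
    ∃ (Q : ℕ) (y : Fin Q → α), (∀ k, y k ∈ A) ∧ A ⊆ ⋃ k, ball (y k) r := by
  obtain ⟨t, htA, ht, hcover⟩ := finite_approx_of_totallyBounded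
    (hA.isCompact_closure.totallyBounded.subset subset_closure) r hr
  have := ht.to_subtype
  let e := Finite.equivFin t
  refine ⟨Nat.card t, fun k => e.symm k, fun k => htA (e.symm k).2, fun x hx => ?_⟩
  obtain ⟨y, hy, hxy⟩ := mem_iUnion₂.1 (hcover hx)
  exact mem_iUnion.2 ⟨e ⟨y, hy⟩, by simpa only [Equiv.symm_apply_apply] using hxy⟩

namespace ReifenbergPaper

section ConeCondition

variable {E : Type*} [NormedAddCommGroup E] [InnerProductSpace ℝ E] [FiniteDimensional ℝ E]

def UniformConeCondition (j : ℕ) (A : Set E) : Prop :=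
  ∃ r > (0 : ℝ), ∃ K : ℝ, ∀ y ∈ A, ∃ W : Submodule ℝ E, Module.finrank ℝ W = j ∧
    ∀ x ∈ closedBall y r ∩ A, ∀ z ∈ closedBall y r ∩ A,
      dist (Wᗮ.orthogonalProjectionOnto x) (Wᗮ.orthogonalProjectionOnto z) ≤
        K * dist (W.orthogonalProjectionOnto x) (W.orthogonalProjectionOnto z)

theorem uniformConeCondition_of_subsingleton {j : ℕ} {A : Set E} (hA : A.Subsingleton)
    (hW : ∀ y ∈ A, ∃ W : Submodule ℝ E, Module.finrank ℝ W = j) :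
    UniformConeCondition j A :=
  ⟨1, one_pos, 0, fun y hy => (hW y hy).imp fun W hW =>
    ⟨hW, fun x hx z hz => by rw [hA hx.2 hz.2]; simp⟩⟩

theorem UniformConeCondition.exists_finite_graph_cover {j : ℕ} {A : Set E}
    (hA : UniformConeCondition j A) (hbdd : Bornology.IsBounded A) :
    ∃ (Q : ℕ) (W : Fin Q → Submodule ℝ E) (g : ∀ k, W k → (W k)ᗮ),
      (∀ k, Module.finrank ℝ (W k) = j) ∧ (∀ k, ∃ K : ℝ≥0, LipschitzWith K (g k)) ∧
      A ⊆ ⋃ k, {p | ∃ x : W k, p = x + g k x} := by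
  obtain ⟨r, hr, K, hcone⟩ := hA
  obtain ⟨Q, y, hyA, hcover⟩ := hbdd.exists_fin_cover_ball hr
  choose W hW hWcone using fun k => hcone (y k) (hyA k)
  choose g hg hgraph using fun k => exists_lipschitz_graph_of_cone (W k) (hWcone k)
  refine ⟨Q, W, g, hW, hg, fun x hx => ?_⟩
  obtain ⟨k, hk⟩ := mem_iUnion.1 (hcover hx)
  exact mem_iUnion.2 ⟨k, hgraph k ⟨ball_subset_closedBall hk, hx⟩⟩

end ConeCondition

section Reifenberg

variable {n j : ℕ}

theorem self_mem_affPlane (y : EuclideanSpace ℝ (Fin n))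
    (W : Submodule ℝ (EuclideanSpace ℝ (Fin n))) : y ∈ affPlane y W := by
  simp [affPlane]

theorem exists_mem_norm_sub_lt_of_infDist_affPlane_lt {x y : EuclideanSpace ℝ (Fin n)}
    {W : Submodule ℝ (EuclideanSpace ℝ (Fin n))} {ε : ℝ} (h : infDist x (affPlane y W) < ε) :
    ∃ w ∈ W, ‖(x - y) - w‖ < ε := by
  obtain ⟨p, hp, hxp⟩ := (infDist_lt_iff ⟨y, self_mem_affPlane y W⟩).1 h
  exact ⟨p - y, hp, by rwa [sub_sub_sub_cancel_right, ← dist_eq_norm]⟩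

theorem norm_orthogonalProjectionOnto_orthogonal_le_infDist (x y : EuclideanSpace ℝ (Fin n))
    (W : Submodule ℝ (EuclideanSpace ℝ (Fin n))) :
    ‖Wᗮ.orthogonalProjectionOnto (x - y)‖ ≤ infDist x (affPlane y W) := by
  refine (le_infDist ⟨y, self_mem_affPlane y W⟩).2 fun p hp => ?_
  rw [← sub_add_sub_cancel x p y, map_add,
    Submodule.orthogonalProjectionOnto_orthogonal_apply_eq_zero hp, add_zero, dist_eq_norm]
  exact Wᗮ.norm_orthogonalProjectionOnto_apply_le _

theorem exists_affPlane_superset_of_forall_nbhd {S : Set (EuclideanSpace ℝ (Fin n))}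
    {y : EuclideanSpace ℝ (Fin n)} {r : ℝ} (hr : 0 < r)
    (hflat : ∀ δ ∈ Ioo (0 : ℝ) 1, ∃ W : Submodule ℝ (EuclideanSpace ℝ (Fin n)),
      Module.finrank ℝ W = j ∧ S ⊆ nbhd (affPlane y W) (δ * r)) :
    ∃ U : Submodule ℝ (EuclideanSpace ℝ (Fin n)), Module.finrank ℝ U = j ∧ S ⊆ affPlane y U := by
  have happrox : ∀ ε > 0, ∃ W : Submodule ℝ (EuclideanSpace ℝ (Fin n)),
      Module.finrank ℝ W = j ∧ ∀ v ∈ (· - y) '' S, ∃ w ∈ W, ‖v - w‖ < ε := by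
    intro ε hε
    set δ := min (1 / 2) (ε / (2 * r))
    have hδ : δ ∈ Ioo (0 : ℝ) 1 := ⟨by positivity, (min_le_left _ _).trans_lt (by norm_num)⟩
    have hδr : δ * r < ε := calc
      δ * r ≤ ε / (2 * r) * r := by gcongr; exact min_le_right _ _
      _ < ε := by rw [div_mul_eq_mul_div, div_lt_iff₀ (by positivity)]; nlinarith
    obtain ⟨W, hW, hSW⟩ := hflat δ hδ
    refine ⟨W, hW, ?_⟩
    rintro _ ⟨z, hz, rfl⟩
    exact exists_mem_norm_sub_lt_of_infDist_affPlane_lt ((hSW hz).trans_lt hδr)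
  obtain ⟨U, hU, hSU⟩ := exists_finrank_eq_superset_of_forall_approx happrox
  exact ⟨U, hU, fun z hz => hSU (mem_image_of_mem _ hz)⟩

theorem RwRho0.isBounded {δ : ℝ} {A : Set (EuclideanSpace ℝ (Fin n))} (hA : RwRho0 j δ A) :
    Bornology.IsBounded A :=
  let ⟨_, _, ⟨_, hc⟩, _⟩ := hA
  isBounded_closedBall.subset hc

theorem RsRho0.isBounded {δ : ℝ} {A : Set (EuclideanSpace ℝ (Fin n))} (hA : RsRho0 j δ A) :
    Bornology.IsBounded A :=
  let ⟨_, _, ⟨_, hc⟩, _⟩ := hA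
  isBounded_closedBall.subset hc

theorem uniformConeCondition_of_forall_rwRho0 {A : Set (EuclideanSpace ℝ (Fin n))}
    (hA : ∀ δ ∈ Ioo (0 : ℝ) 1, RwRho0 j δ A) : UniformConeCondition j A := by
  by_cases hsub : A.Subsingleton
  · refine uniformConeCondition_of_subsingleton hsub fun y hy => ?_
    obtain ⟨ρ0, hρ0, -, hflat⟩ := hA (1 / 2) ⟨by norm_num, by norm_num⟩
    obtain ⟨W, hW, -⟩ := hflat y hy ρ0 ⟨hρ0, le_rfl⟩
    exact ⟨W, hW⟩
  obtain ⟨a, ha, b, hb, hab⟩ := not_subsingleton_iff.1 hsub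
  have hr : 0 < dist a b / 2 := half_pos (dist_pos.2 hab)
  refine ⟨dist a b / 2, hr, 0, fun y hy => ?_⟩
  have hflat : ∀ δ ∈ Ioo (0 : ℝ) 1, ∃ W : Submodule ℝ (EuclideanSpace ℝ (Fin n)),
      Module.finrank ℝ W = j ∧
        closedBall y (dist a b / 2) ∩ A ⊆ nbhd (affPlane y W) (δ * (dist a b / 2)) := by
    intro δ hδ
    obtain ⟨ρ0, -, ⟨c, hc⟩, hflat⟩ := hA δ hδ
    have hac : dist a c ≤ ρ0 := hc ha
    have hbc : dist b c ≤ ρ0 := hc hb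
    exact hflat y hy _ ⟨hr, by linarith [dist_triangle_right a b c]⟩
  obtain ⟨U, hU, hplane⟩ := exists_affPlane_superset_of_forall_nbhd hr hflat
  refine ⟨U, hU, fun x hx z hz => ?_⟩
  have hxz : x - z ∈ U := by
    simpa using U.sub_mem (hplane hx) (hplane hz)
  rw [dist_eq_norm, ← map_sub, Submodule.orthogonalProjectionOnto_orthogonal_apply_eq_zero hxz]
  simp

theorem norm_orthogonalProjectionOnto_orthogonal_sub_le {A : Set (EuclideanSpace ℝ (Fin n))}
    {W : Submodule ℝ (EuclideanSpace ℝ (Fin n))} {δ ρ0 : ℝ}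
    (hflat : ∀ x ∈ A, ∀ ρ ∈ Ioc (0 : ℝ) ρ0, closedBall x ρ ∩ A ⊆ nbhd (affPlane x W) (δ * ρ))
    {x z : EuclideanSpace ℝ (Fin n)} (hx : x ∈ A) (hz : z ∈ A) (hxz : dist x z ≤ ρ0) :
    ‖Wᗮ.orthogonalProjectionOnto (x - z)‖ ≤ δ * ‖x - z‖ := by
  rcases eq_or_ne x z with rfl | hne
  · simp
  rw [← dist_eq_norm]
  exact (norm_orthogonalProjectionOnto_orthogonal_le_infDist x z W).trans
    (hflat z hz _ ⟨dist_pos.2 hne, hxz⟩ ⟨mem_closedBall.2 le_rfl, hx⟩)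

theorem uniformConeCondition_of_rsRho0 {δ : ℝ} (hδ : δ ∈ Ioo (0 : ℝ) 1)
    {A : Set (EuclideanSpace ℝ (Fin n))} (hA : RsRho0 j δ A) : UniformConeCondition j A := by
  obtain ⟨ρ0, hρ0, -, W, hW, hflat⟩ := hA
  refine ⟨ρ0 / 2, half_pos hρ0, δ / (1 - δ), fun y _ => ⟨W, hW, fun x hx z hz => ?_⟩⟩
  have hxz : dist x z ≤ ρ0 := by
    have hxy : dist x y ≤ ρ0 / 2 := hx.1
    have hzy : dist z y ≤ ρ0 / 2 := hz.1
    linarith [dist_triangle_right x z y]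
  have hnormal := norm_orthogonalProjectionOnto_orthogonal_sub_le hflat hx.2 hz.2 hxz
  have hsplit : ‖x - z‖ ≤ ‖W.orthogonalProjectionOnto (x - z)‖ +
      ‖Wᗮ.orthogonalProjectionOnto (x - z)‖ := by
    calc ‖x - z‖ = ‖W.starProjection (x - z) + Wᗮ.starProjection (x - z)‖ := by
          rw [W.starProjection_add_starProjection_orthogonal]
      _ ≤ _ := norm_add_le _ _
  rw [dist_eq_norm, dist_eq_norm, ← map_sub, ← map_sub, div_mul_eq_mul_div,
    le_div_iff₀ (sub_pos.2 hδ.2)]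
  nlinarith [hδ.1]

end Reifenberg

theorem lipschitz_graph_finite_cover_general (n j : ℕ)
    (A : Set (EuclideanSpace ℝ (Fin n)))
    (hA : RGamma .w .rho0 j Option.none A ∨
      ∃ γ : Option ℝ, memDelta γ ∧ RGamma .s .rho0 j γ A) :
    ∃ (Q : ℕ) (W : Fin Q → Submodule ℝ (EuclideanSpace ℝ (Fin n)))
      (g : ∀ k, (W k) → (W k)ᗮ),
      (∀ k, Module.finrank ℝ (W k) = j) ∧
      (∀ k, ∃ K : ℝ≥0, LipschitzWith K (g k)) ∧
      A ⊆ ⋃ k, lipGraph (W k) (g k) := by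
  obtain ⟨hcone, hbdd⟩ : UniformConeCondition j A ∧ Bornology.IsBounded A := by
    rcases hA with hweak | ⟨γ, hγ, hstrong⟩
    · exact ⟨uniformConeCondition_of_forall_rwRho0 hweak,
        RwRho0.isBounded (hweak (1 / 2) ⟨by norm_num, by norm_num⟩)⟩
    obtain ⟨δ, hδ, hstrong⟩ : ∃ δ ∈ Ioo (0 : ℝ) 1, RsRho0 j δ A := by
      rcases hγ with rfl | ⟨δ, hδ, rfl⟩
      · exact ⟨1 / 2, ⟨by norm_num, by norm_num⟩, hstrong _ ⟨by norm_num, by norm_num⟩⟩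
      · exact ⟨δ, hδ, hstrong⟩
    exact ⟨uniformConeCondition_of_rsRho0 hδ hstrong, hstrong.isBounded⟩
  exact hcone.exists_finite_graph_cover hbdd

/-- a set with the `ρ0`-uniform fine weak property or a `ρ0`-uniform
strong Reifenberg property is covered by finitely many Lipschitz graphs over
`j`-dimensional planes. -/
theorem lipschitz_graph_finite_cover (n j : ℕ) (hj : j ≤ n)
    (A : Set (EuclideanSpace ℝ (Fin n)))
    (hA : RGamma .w .rho0 j Option.none A ∨
      ∃ γ : Option ℝ, memDelta γ ∧ RGamma .s .rho0 j γ A) :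
    ∃ (Q : ℕ) (W : Fin Q → Submodule ℝ (EuclideanSpace ℝ (Fin n)))
      (g : ∀ k, (W k) → (W k)ᗮ),
      (∀ k, Module.finrank ℝ (W k) = j) ∧
      (∀ k, ∃ K : ℝ≥0, LipschitzWith K (g k)) ∧
      A ⊆ ⋃ k, lipGraph (W k) (g k) :=
  lipschitz_graph_finite_cover_general n j A hA

end ReifenbergPaper
end
end

section
/- Let n ∈ ℕ, j ≤ n, and suppose A ⊆ ℝⁿ satisfies A ∈ R(w,ρ0,fine;j) or A ∈ R(s,ρ0,γ;j) for some γ ∈ Δ := {fine} ∪ (0,1). Then A is bounded and its upper Minkowski dimension (and hence also its lower Minkowski dimension) is at most j. -/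
open Metric Set MeasureTheory ENNReal NNReal

attribute [local instance] Classical.propDecidable

noncomputable section

namespace ReifenbergPaper

/-!
Both hypotheses give, for every small `κ > 0`, a covering property uniform over `A`: for
`x ∈ A` and `r ≤ r₀`, the set `B_r(x) ∩ A` is covered by `M ≤ (C/κ)^j` balls of radius `κ r`
centred in `A`, with `C` independent of `κ`. In the weak fine case `B_r(x) ∩ A` lies within
`(κ/3) r` of a `j`-plane, so a net of its orthogonal projection onto the plane, pulled back,
does the job. In the strong case the direction `W` of the plane is fixed, which makes the
projection onto `W` co-Lipschitz on `A` at scales `≤ ρ₀`: `(1 - δ) |y - y'| ≤ |P_W (y - y')|`.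
Iterating the covering property gives `N_{2κ^k r₀}(A) ≤ N₀ M^k`, hence `N_ε(A) ≲ ε^{-s}` with
`s = log M / log (1/κ)`, and `s → j` as `κ → 0`.
-/

open Module Filter Topology

section CoveringNumber

variable {X Y : Type*}

lemma coveringNumber_union_le [PseudoEMetricSpace X] (ε : ℝ≥0) (A B : Set X) :
    coveringNumber ε (A ∪ B) ≤ coveringNumber ε A + coveringNumber ε B := by
  by_cases hA : coveringNumber ε A = ⊤
  · simp [hA]
  by_cases hB : coveringNumber ε B = ⊤
  · simp [hB]
  rw [← encard_minimalCover hA, ← encard_minimalCover hB]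
  refine (IsCover.coveringNumber_le_encard ?_ ?_).trans (encard_union_le _ _)
  · exact union_subset_union minimalCover_subset minimalCover_subset
  · exact (isCover_minimalCover hA).union (isCover_minimalCover hB)

lemma coveringNumber_biUnion_le [PseudoEMetricSpace X] {ι : Type*} (ε : ℝ≥0) (s : Finset ι)
    (A : ι → Set X) : coveringNumber ε (⋃ i ∈ s, A i) ≤ ∑ i ∈ s, coveringNumber ε (A i) := by
  induction s using Finset.induction_on with
  | empty => simp
  | insert i s hi ih =>
    rw [Finset.set_biUnion_insert, Finset.sum_insert hi]
    exact (coveringNumber_union_le ε _ _).trans (add_le_add_right ih _)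

variable [PseudoMetricSpace X] [PseudoMetricSpace Y]

lemma coveringNumber_le_coveringNumber_image {f : X → Y} {S : Set X} {a b : ℝ} {ε r : ℝ≥0}
    (hf : ∀ y ∈ S, ∀ y' ∈ S, dist y y' ≤ a * dist (f y) (f y') + b) (ha : 0 ≤ a)
    (hr : a * ε + b ≤ r) : coveringNumber r S ≤ coveringNumber ε (f '' S) := by
  by_cases htop : coveringNumber ε (f '' S) = ⊤
  · simp [htop]
  rcases S.eq_empty_or_nonempty with rfl | ⟨y₀, -⟩
  · simp
  have : Nonempty X := ⟨y₀⟩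
  have hsection : ∀ c ∈ minimalCover ε (f '' S), ∃ y ∈ S, f y = c :=
    fun c hc => (minimalCover_subset hc : c ∈ f '' S)
  choose! g hgS hfg using hsection
  rw [← encard_minimalCover htop]
  refine (IsCover.coveringNumber_le_encard ?_ ?_).trans (encard_image_le g _)
  · exact image_subset_iff.mpr hgS
  refine .of_subset_iUnion_closedBall fun y hy => ?_
  obtain ⟨c, hc, hyc⟩ := mem_iUnion₂.mp <|
    (isCover_minimalCover htop).subset_iUnion_closedBall (mem_image_of_mem f hy)
  refine mem_iUnion₂.mpr ⟨g c, mem_image_of_mem g hc, mem_closedBall.mpr ?_⟩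
  calc dist y (g c) ≤ a * dist (f y) (f (g c)) + b := hf y hy (g c) (hgS c hc)
    _ ≤ a * ε + b := by
      rw [hfg c hc]
      gcongr
      exact mem_closedBall.mp hyc
    _ ≤ r := hr

lemma coveringNumber_ne_top_of_isBounded [ProperSpace X] {A : Set X}
    (hA : Bornology.IsBounded A) {r : ℝ≥0} (hr : r ≠ 0) : coveringNumber r A ≠ ⊤ := by
  obtain ⟨C, hCA, hC, hcov⟩ := exists_finite_isCover_of_isCompact_closure hr hA.isCompact_closure
  exact ne_top_of_le_ne_top hC.encard_lt_top.ne (hcov.coveringNumber_le_encard hCA)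

end CoveringNumber

def HasUniformCovering {X : Type*} [PseudoMetricSpace X] (A : Set X) (r₀ κ : ℝ≥0) (M : ℕ) :
    Prop :=
  ∀ x ∈ A, ∀ r : ℝ≥0, 0 < r → r ≤ r₀ → coveringNumber (κ * r) (closedBall x r ∩ A) ≤ M

namespace HasUniformCovering

variable {X : Type*} [PseudoMetricSpace X] {A : Set X} {r₀ κ : ℝ≥0} {M : ℕ}

lemma coveringNumber_mul_le (h : HasUniformCovering A r₀ κ M) {r : ℝ≥0} (hr : 0 < r)
    (hr₀ : r ≤ r₀) (hfin : coveringNumber r A ≠ ⊤) :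
    coveringNumber (κ * r) A ≤ coveringNumber r A * M := by
  have hC : (minimalCover r A).Finite := finite_minimalCover
  have hA : A = ⋃ c ∈ hC.toFinset, closedBall c r ∩ A := by
    refine Subset.antisymm (fun y hy => ?_) (iUnion₂_subset fun _ _ => inter_subset_right)
    obtain ⟨c, hc, hyc⟩ :=
      mem_iUnion₂.mp ((isCover_minimalCover hfin).subset_iUnion_closedBall hy)
    exact mem_iUnion₂.mpr ⟨c, hC.mem_toFinset.mpr hc, hyc, hy⟩
  calc coveringNumber (κ * r) A
      ≤ ∑ c ∈ hC.toFinset, coveringNumber (κ * r) (closedBall c r ∩ A) := by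
        conv_lhs => rw [hA]
        exact coveringNumber_biUnion_le _ _ _
    _ ≤ ∑ _c ∈ hC.toFinset, (M : ℕ∞) :=
        Finset.sum_le_sum fun c hc => h c (minimalCover_subset (hC.mem_toFinset.mp hc)) r hr hr₀
    _ = coveringNumber r A * M := by
        rw [Finset.sum_const, nsmul_eq_mul, ← encard_minimalCover hfin,
          hC.encard_eq_coe_toFinset_card]

lemma coveringNumber_pow_mul_le (h : HasUniformCovering A r₀ κ M) (hκ : 0 < κ) (hκ1 : κ ≤ 1)
    (hr₀ : 0 < r₀) {N : ℕ} (hN : coveringNumber r₀ A = N) (k : ℕ) :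
    coveringNumber (κ ^ k * r₀) A ≤ (N * M ^ k : ℕ) := by
  induction k with
  | zero => simp [hN]
  | succ k ih =>
    calc coveringNumber (κ ^ (k + 1) * r₀) A = coveringNumber (κ * (κ ^ k * r₀)) A := by
          rw [pow_succ', mul_assoc]
      _ ≤ coveringNumber (κ ^ k * r₀) A * M :=
          h.coveringNumber_mul_le (by positivity) (mul_le_of_le_one_left' (pow_le_one₀ hκ.le hκ1))
            (ne_top_of_le_ne_top (ENat.natCast_ne_top _) ih)
      _ ≤ (N * M ^ k : ℕ) * M := by gcongr
      _ = (N * M ^ (k + 1) : ℕ) := by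
          push_cast
          ring

end HasUniformCovering

section FiniteDimensional

variable {E : Type*} [NormedAddCommGroup E] [NormedSpace ℝ E] [FiniteDimensional ℝ E]

lemma card_le_of_isSeparated_of_subset_closedBall {F : Finset E} {x : E} {R : ℝ} {ε : ℝ≥0}
    (hε : 0 < ε) (hR : 0 ≤ R) (hF : (F : Set E) ⊆ closedBall x R)
    (hsep : IsSeparated (ε : ℝ≥0∞) (F : Set E)) :
    (F.card : ℝ) ≤ ((2 * R + ε) / ε) ^ finrank ℝ E := by
  borelize E
  set μ : Measure E := Measure.addHaar
  have hε2 : (0 : ℝ) < ε / 2 := by positivity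
  have hdisj : (F : Set E).PairwiseDisjoint fun c => ball c (ε / 2) := by
    intro c hc c' hc' hne
    refine ball_disjoint_ball ?_
    have : (ε : ℝ≥0∞) < edist c c' := hsep hc hc' hne
    rw [edist_dist, ← ENNReal.ofReal_coe_nnreal, ENNReal.ofReal_lt_ofReal_iff'] at this
    linarith
  have hsub : ⋃ c ∈ F, ball c (ε / 2) ⊆ ball x (R + ε / 2) :=
    iUnion₂_subset fun c hc => ball_subset_ball' (by linarith [mem_closedBall.mp (hF hc)])
  have hvol : (F.card : ℝ≥0∞) * ENNReal.ofReal ((ε / 2) ^ finrank ℝ E) * μ (ball 0 1) ≤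
      ENNReal.ofReal ((R + ε / 2) ^ finrank ℝ E) * μ (ball 0 1) :=
    calc (F.card : ℝ≥0∞) * ENNReal.ofReal ((ε / 2) ^ finrank ℝ E) * μ (ball 0 1)
        = μ (⋃ c ∈ F, ball c (ε / 2)) := by
          rw [measure_biUnion_finset hdisj fun _ _ => measurableSet_ball]
          simp only [μ.addHaar_ball_of_pos _ hε2, Finset.sum_const, nsmul_eq_mul, mul_assoc]
      _ ≤ μ (ball x (R + ε / 2)) := measure_mono hsub
      _ = ENNReal.ofReal ((R + ε / 2) ^ finrank ℝ E) * μ (ball 0 1) :=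
          μ.addHaar_ball_of_pos _ (by positivity)
  rw [ENNReal.mul_le_mul_iff_left (measure_ball_pos _ _ one_pos).ne' measure_ball_lt_top.ne,
    ← ENNReal.ofReal_natCast, ← ENNReal.ofReal_mul (by positivity),
    ENNReal.ofReal_le_ofReal_iff (by positivity)] at hvol
  calc (F.card : ℝ) ≤ (R + ε / 2) ^ finrank ℝ E / (ε / 2) ^ finrank ℝ E := by
        rwa [le_div_iff₀ (by positivity)]
    _ = ((2 * R + ε) / ε) ^ finrank ℝ E := by
        rw [← div_pow]
        congr 1
        field_simp

lemma packingNumber_le_of_subset_closedBall {T : Set E} {x : E} {R : ℝ} {ε : ℝ≥0}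
    (hε : 0 < ε) (hR : 0 ≤ R) (hT : T ⊆ closedBall x R) :
    packingNumber ε T ≤ ⌊((2 * R + ε) / ε) ^ finrank ℝ E⌋₊ := by
  refine iSup₂_le fun C hCT => iSup_le fun hsep => ?_
  by_contra! hlt
  obtain ⟨D, hDC, hD⟩ := exists_subset_encard_eq (Order.add_one_le_of_lt hlt)
  have hDfin : D.Finite := finite_of_encard_eq_coe hD
  have hcard := card_le_of_isSeparated_of_subset_closedBall (F := hDfin.toFinset) hε hR
    (by simpa using (hDC.trans hCT).trans hT) (by simpa using hsep.subset hDC)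
  rw [← hDfin.cast_ncard_eq, ncard_eq_toFinset_card D hDfin] at hD
  have hD' : hDfin.toFinset.card = ⌊((2 * R + ε) / ε) ^ finrank ℝ E⌋₊ + 1 := by exact_mod_cast hD
  rw [hD', Nat.cast_add_one] at hcard
  exact (Nat.lt_floor_add_one _).not_ge hcard

lemma coveringNumber_le_of_subset_closedBall {T : Set E} {x : E} {R : ℝ} {ε : ℝ≥0}
    (hε : 0 < ε) (hR : 0 ≤ R) (hT : T ⊆ closedBall x R) :
    coveringNumber ε T ≤ ⌊((2 * R + ε) / ε) ^ finrank ℝ E⌋₊ :=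
  (coveringNumber_le_packingNumber ε T).trans (packingNumber_le_of_subset_closedBall hε hR hT)

end FiniteDimensional

section Projection

variable {E : Type*} [NormedAddCommGroup E] [InnerProductSpace ℝ E]

lemma coveringNumber_le_of_dist_le_norm_starProjection (W : Submodule ℝ E)
    [FiniteDimensional ℝ W] {S : Set E} {x : E} {ρ ε a b : ℝ} {r : ℝ≥0} (hρ : 0 ≤ ρ)
    (hε : 0 < ε) (ha : 0 ≤ a) (hS : S ⊆ closedBall x ρ)
    (hdist : ∀ y ∈ S, ∀ y' ∈ S, dist y y' ≤ a * ‖W.starProjection (y - y')‖ + b)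
    (hr : a * ε + b ≤ r) :
    coveringNumber r S ≤ ⌊((2 * ρ + ε) / ε) ^ finrank ℝ W⌋₊ := by
  set f : E → W := fun y => W.orthogonalProjectionOnto (y - x)
  have hf : ∀ y y', dist (f y) (f y') = ‖W.starProjection (y - y')‖ := by
    intro y y'
    rw [dist_eq_norm, ← map_sub, sub_sub_sub_cancel_right, Submodule.starProjection_apply,
      Submodule.coe_norm]
  have hfS : f '' S ⊆ closedBall 0 ρ := by
    rintro _ ⟨y, hy, rfl⟩
    rw [mem_closedBall_zero_iff]
    exact (W.norm_orthogonalProjectionOnto_apply_le _).trans (mem_closedBall_iff_norm.mp (hS hy))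
  have hε' : (ε.toNNReal : ℝ) = ε := Real.coe_toNNReal _ hε.le
  calc coveringNumber r S ≤ coveringNumber ε.toNNReal (f '' S) :=
        coveringNumber_le_coveringNumber_image (fun y hy y' hy' => hf y y' ▸ hdist y hy y' hy')
          ha (by rwa [hε'])
    _ ≤ _ := by
        simpa only [hε'] using
          coveringNumber_le_of_subset_closedBall (Real.toNNReal_pos.mpr hε) hρ hfS

end Projection

section Flatness

variable {n : ℕ}

lemma norm_starProjection_orthogonal_le_infDist (W : Submodule ℝ (EuclideanSpace ℝ (Fin n)))
    (x y : EuclideanSpace ℝ (Fin n)) :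
    ‖Wᗮ.starProjection (y - x)‖ ≤ infDist y (affPlane x W) := by
  refine (le_infDist ⟨x, by simp [affPlane]⟩).mpr fun z (hz : z - x ∈ W) => ?_
  rw [← sub_add_sub_cancel y z x, map_add, Submodule.starProjection_orthogonal_apply_eq_zero hz,
    add_zero, dist_eq_norm]
  exact Wᗮ.norm_starProjection_apply_le _

lemma dist_le_norm_starProjection_add_of_subset_nbhd
    {W : Submodule ℝ (EuclideanSpace ℝ (Fin n))} {S : Set (EuclideanSpace ℝ (Fin n))}
    {x : EuclideanSpace ℝ (Fin n)} {r : ℝ} (hS : S ⊆ nbhd (affPlane x W) r)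
    {y y' : EuclideanSpace ℝ (Fin n)} (hy : y ∈ S) (hy' : y' ∈ S) :
    dist y y' ≤ ‖W.starProjection (y - y')‖ + 2 * r := by
  have hQ : ∀ z ∈ S, ‖Wᗮ.starProjection (z - x)‖ ≤ r :=
    fun z hz => (norm_starProjection_orthogonal_le_infDist W x z).trans (hS hz)
  have hQyy' : Wᗮ.starProjection (y - y') =
      Wᗮ.starProjection (y - x) - Wᗮ.starProjection (y' - x) := by
    rw [← map_sub, sub_sub_sub_cancel_right]
  calc dist y y' = ‖W.starProjection (y - y') + Wᗮ.starProjection (y - y')‖ := by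
        rw [Submodule.starProjection_add_starProjection_orthogonal, dist_eq_norm]
    _ ≤ ‖W.starProjection (y - y')‖ + ‖Wᗮ.starProjection (y - y')‖ := norm_add_le _ _
    _ ≤ ‖W.starProjection (y - y')‖ + 2 * r := by
        rw [hQyy']
        linarith [norm_sub_le (Wᗮ.starProjection (y - x)) (Wᗮ.starProjection (y' - x)),
          hQ y hy, hQ y' hy']

lemma one_sub_mul_dist_le_norm_starProjection {W : Submodule ℝ (EuclideanSpace ℝ (Fin n))}
    {x y : EuclideanSpace ℝ (Fin n)} {δ : ℝ} (h : y ∈ nbhd (affPlane x W) (δ * dist y x)) :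
    (1 - δ) * dist y x ≤ ‖W.starProjection (y - x)‖ := by
  have hQ := (norm_starProjection_orthogonal_le_infDist W x y).trans h
  have := norm_add_le (W.starProjection (y - x)) (Wᗮ.starProjection (y - x))
  rw [Submodule.starProjection_add_starProjection_orthogonal, ← dist_eq_norm] at this
  linarith

end Flatness

section Reifenberg

variable {n j : ℕ} {A : Set (EuclideanSpace ℝ (Fin n))}

lemma RwRho0.isBounded_s8 {δ : ℝ} (h : RwRho0 j δ A) : Bornology.IsBounded A := by
  obtain ⟨ρ0, -, ⟨c, hc⟩, -⟩ := h
  exact isBounded_closedBall.subset hc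

lemma RsRho0.isBounded_s8 {δ : ℝ} (h : RsRho0 j δ A) : Bornology.IsBounded A := by
  obtain ⟨ρ0, -, ⟨c, hc⟩, -⟩ := h
  exact isBounded_closedBall.subset hc

lemma RwRho0.hasUniformCovering {κ : ℝ≥0} (h : RwRho0 j (κ / 3) A) (hκ : 0 < κ) (hκ3 : κ ≤ 3) :
    ∃ r₀ : ℝ≥0, 0 < r₀ ∧ ∃ M : ℕ, (M : ℝ) ≤ (9 / κ) ^ j ∧ HasUniformCovering A r₀ κ M := by
  obtain ⟨ρ0, hρ0, -, hflat⟩ := h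
  refine ⟨ρ0.toNNReal, Real.toNNReal_pos.mpr hρ0, ⌊(9 / κ : ℝ) ^ j⌋₊,
    Nat.floor_le (by positivity), fun x hx r hr hrρ0 => ?_⟩
  have hκ' : (0 : ℝ) < κ := hκ
  have hr' : (0 : ℝ) < r := hr
  obtain ⟨W, hW, hS⟩ := hflat x hx r ⟨hr, (Real.le_toNNReal_iff_coe_le hρ0.le).mp hrρ0⟩
  calc coveringNumber (κ * r) (closedBall x r ∩ A)
      ≤ ⌊((2 * (r : ℝ) + κ / 3 * r) / (κ / 3 * r)) ^ finrank ℝ W⌋₊ := by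
        refine coveringNumber_le_of_dist_le_norm_starProjection (ε := κ / 3 * r)
          (b := 2 * (κ / 3 * r)) W r.2 (by positivity) zero_le_one inter_subset_left
          (fun y hy y' hy' => ?_) (by push_cast; linarith)
        rw [one_mul]
        exact dist_le_norm_starProjection_add_of_subset_nbhd hS hy hy'
    _ ≤ ⌊(9 / κ : ℝ) ^ j⌋₊ := by
        have hbase : (2 * (r : ℝ) + κ / 3 * r) / (κ / 3 * r) ≤ 9 / κ := by
          have hκ3' : (κ : ℝ) ≤ 3 := hκ3
          rw [div_le_div_iff₀ (by positivity) hκ']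
          nlinarith [mul_nonneg (sub_nonneg.mpr hκ3') (mul_pos hκ' hr').le]
        rw [hW]
        exact_mod_cast Nat.floor_le_floor (pow_le_pow_left₀ (by positivity) hbase j)

lemma RsRho0.hasUniformCovering {δ : ℝ} (h : RsRho0 j δ A) (hδ0 : 0 ≤ δ) (hδ1 : δ < 1)
    {κ : ℝ≥0} (hκ : 0 < κ) (hκ1 : κ ≤ 1) :
    ∃ r₀ : ℝ≥0, 0 < r₀ ∧ ∃ M : ℕ, (M : ℝ) ≤ (3 / ((1 - δ) * κ)) ^ j ∧
      HasUniformCovering A r₀ κ M := by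
  obtain ⟨ρ0, hρ0, -, W, hW, hflat⟩ := h
  have hδ' : 0 < 1 - δ := sub_pos.mpr hδ1
  have hκ' : (0 : ℝ) < κ := hκ
  have hcolipschitz : ∀ y ∈ A, ∀ y' ∈ A, dist y y' ≤ ρ0 →
      (1 - δ) * dist y y' ≤ ‖W.starProjection (y - y')‖ := by
    intro y hy y' hy' hyy'
    rcases (dist_nonneg (x := y) (y := y')).eq_or_lt with h0 | hpos
    · rw [← h0, mul_zero]
      exact norm_nonneg _
    · exact one_sub_mul_dist_le_norm_starProjection
        (hflat y' hy' _ ⟨hpos, hyy'⟩ ⟨mem_closedBall.mpr le_rfl, hy⟩)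
  refine ⟨(ρ0 / 2).toNNReal, Real.toNNReal_pos.mpr (by positivity),
    ⌊(3 / ((1 - δ) * κ)) ^ j⌋₊, Nat.floor_le (by positivity), fun x hx r hr hrr₀ => ?_⟩
  have hr' : (0 : ℝ) < r := hr
  have hrr₀' : (r : ℝ) ≤ ρ0 / 2 := (Real.le_toNNReal_iff_coe_le (by positivity)).mp hrr₀
  calc coveringNumber (κ * r) (closedBall x r ∩ A)
      ≤ ⌊((2 * (r : ℝ) + (1 - δ) * κ * r) / ((1 - δ) * κ * r)) ^ finrank ℝ W⌋₊ := by
        refine coveringNumber_le_of_dist_le_norm_starProjection (ε := (1 - δ) * κ * r)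
          (a := (1 - δ)⁻¹) (b := 0) W r.2 (by positivity) (by positivity) inter_subset_left
          (fun y hy y' hy' => ?_) (by push_cast; field_simp; simp)
        have hyy' : dist y y' ≤ ρ0 := by
          linarith [dist_triangle_right y y' x, mem_closedBall.mp hy.1, mem_closedBall.mp hy'.1]
        rw [add_zero, ← div_eq_inv_mul, le_div_iff₀ hδ', mul_comm]
        exact hcolipschitz y hy.2 y' hy'.2 hyy'
    _ ≤ ⌊(3 / ((1 - δ) * κ)) ^ j⌋₊ := by
        have hbase : (2 * (r : ℝ) + (1 - δ) * κ * r) / ((1 - δ) * κ * r) ≤ 3 / ((1 - δ) * κ) := by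
          have hκ1' : (1 - δ) * (κ : ℝ) ≤ 1 := by
            have : (κ : ℝ) ≤ 1 := hκ1
            nlinarith
          rw [div_le_div_iff₀ (by positivity) (by positivity)]
          nlinarith [mul_nonneg (sub_nonneg.mpr hκ1') (mul_pos (mul_pos hδ' hκ') hr').le]
        rw [hW]
        exact_mod_cast Nat.floor_le_floor (pow_le_pow_left₀ (by positivity) hbase j)

end Reifenberg

lemma eventually_log_div_neg_log_le {g : ℝ → ℝ} {C t s : ℝ} (hg : ∀ ε, 0 ≤ g ε) (hs : 0 ≤ s)
    (hts : t < s) (h : ∀ᶠ ε in 𝓝[>] 0, g ε ≤ C * ε ^ (-t)) :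
    ∀ᶠ ε in 𝓝[>] 0, Real.log (g ε) / -Real.log ε ≤ s := by
  have hlog : Tendsto (fun ε => -Real.log ε) (𝓝[>] 0) atTop :=
    tendsto_neg_atBot_atTop.comp Real.tendsto_log_nhdsGT_zero
  filter_upwards [h, hlog.eventually_gt_atTop 0, hlog.eventually_ge_atTop (Real.log C / (s - t)),
    self_mem_nhdsWithin] with ε hgε hε hεC (hpos : 0 < ε)
  rw [div_le_iff₀ hε]
  rcases (hg ε).eq_or_lt with h0 | hgpos
  · rw [← h0, Real.log_zero]
    positivity
  have hCpos : 0 < C := pos_of_mul_pos_left (hgpos.trans_le hgε) (by positivity)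
  calc Real.log (g ε) ≤ Real.log (C * ε ^ (-t)) := Real.log_le_log hgpos hgε
    _ = Real.log C + t * -Real.log ε := by
        rw [Real.log_mul hCpos.ne' (by positivity), Real.log_rpow hpos]
        ring
    _ ≤ s * -Real.log ε := by
        rw [div_le_iff₀ (by linarith)] at hεC
        linarith

section MinkowskiDimension

variable {n : ℕ} {A : Set (EuclideanSpace ℝ (Fin n))}

lemma coverNum_le_coveringNumber {ε : ℝ} {r : ℝ≥0} (h : 2 * r ≤ ε) :
    coverNum A ε ≤ coveringNumber r A := by
  by_cases htop : coveringNumber r A = ⊤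
  · simp [htop]
  have hC : (minimalCover r A).Finite := finite_minimalCover
  rw [← encard_minimalCover htop, hC.encard_eq_coe_toFinset_card, ENat.toENNReal_coe]
  set s := hC.toFinset.image (closedBall · r)
  have hcov : A ⊆ ⋃ t ∈ s, t := by
    intro y hy
    obtain ⟨c, hc, hyc⟩ :=
      mem_iUnion₂.mp ((isCover_minimalCover htop).subset_iUnion_closedBall hy)
    exact mem_iUnion₂.mpr ⟨_, Finset.mem_image_of_mem _ (hC.mem_toFinset.mpr hc), hyc⟩
  have hdiam : ∀ t ∈ s, diam t ≤ ε :=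
    Finset.forall_mem_image.mpr fun _ _ => (diam_closedBall r.2).trans h
  exact iInf_le_of_le s <| iInf_le_of_le hcov <| iInf_le_of_le hdiam <| by
    exact_mod_cast Finset.card_image_le

lemma one_le_coverNum (hA : A.Nonempty) (ε : ℝ) : 1 ≤ coverNum A ε := by
  refine le_iInf fun s => le_iInf fun hcov => le_iInf fun _ => ?_
  obtain ⟨y, hy⟩ := hA
  obtain ⟨t, ht, -⟩ := mem_iUnion₂.mp (hcov hy)
  exact_mod_cast Finset.card_pos.mpr ⟨t, ht⟩

lemma HasUniformCovering.toReal_coverNum_le {r₀ κ : ℝ≥0} {M N k : ℕ} {ε : ℝ}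
    (h : HasUniformCovering A r₀ κ M) (hκ : 0 < κ) (hκ1 : κ ≤ 1) (hr₀ : 0 < r₀)
    (hN : coveringNumber r₀ A = N) (hε : 2 * ((κ : ℝ) ^ k * r₀) ≤ ε) :
    (coverNum A ε).toReal ≤ N * M ^ k := by
  have hcov : coverNum A ε ≤ ((N * M ^ k : ℕ) : ℝ≥0∞) :=
    calc coverNum A ε ≤ coveringNumber (κ ^ k * r₀) A := coverNum_le_coveringNumber (by simpa)
      _ ≤ ((N * M ^ k : ℕ) : ℕ∞) :=
          ENat.toENNReal_le.mpr (h.coveringNumber_pow_mul_le hκ hκ1 hr₀ hN k)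
      _ = ((N * M ^ k : ℕ) : ℝ≥0∞) := ENat.toENNReal_coe _
  exact_mod_cast ENNReal.toReal_le_of_le_ofReal (by positivity) (by simpa using hcov)

lemma HasUniformCovering.exists_coverNum_le_rpow {r₀ κ : ℝ≥0} {M : ℕ} {s : ℝ}
    (h : HasUniformCovering A r₀ κ M) (hA : Bornology.IsBounded A) (hκ : 0 < κ) (hκ1 : κ < 1)
    (hr₀ : 0 < r₀) (hs : 0 ≤ s) (hM : (M : ℝ) ≤ (κ : ℝ) ^ (-s)) :
    ∃ C : ℝ, ∀ ε : ℝ, 0 < ε → ε ≤ 2 * r₀ → (coverNum A ε).toReal ≤ C * ε ^ (-s) := by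
  obtain ⟨N, hN⟩ := ENat.ne_top_iff_exists.mp (coveringNumber_ne_top_of_isBounded hA hr₀.ne')
  refine ⟨N * M * (2 * r₀) ^ s, fun ε hε hε₀ => ?_⟩
  have hκ' : (0 : ℝ) < κ := hκ
  have hr₀' : (0 : ℝ) < r₀ := hr₀
  obtain ⟨k, hk1, hk⟩ := exists_nat_pow_near_of_lt_one (x := ε / (2 * r₀)) (by positivity)
    ((div_le_one (by positivity)).mpr hε₀) hκ' hκ1
  calc (coverNum A ε).toReal ≤ N * M ^ (k + 1) :=
        h.toReal_coverNum_le hκ hκ1.le hr₀ hN.symm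
          (by linarith [(lt_div_iff₀ (by positivity)).mp hk1])
    _ = N * M * M ^ k := by ring
    _ ≤ N * M * ((κ : ℝ) ^ (-s)) ^ k := by gcongr
    _ = N * M * ((κ : ℝ) ^ k) ^ (-s) := by
        rw [← Real.rpow_mul_natCast hκ'.le, ← Real.rpow_natCast_mul hκ'.le, mul_comm (k : ℝ)]
    _ ≤ N * M * (ε / (2 * r₀)) ^ (-s) := by
        exact mul_le_mul_of_nonneg_left
          (Real.rpow_le_rpow_of_nonpos (by positivity) hk (neg_nonpos.mpr hs)) (by positivity)
    _ = N * M * (2 * r₀) ^ s * ε ^ (-s) := by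
        rw [Real.div_rpow hε.le (by positivity), Real.rpow_neg (by positivity : (0 : ℝ) ≤ 2 * r₀)]
        field_simp

lemma log_toReal_coverNum_nonneg (hA : A.Nonempty) (ε : ℝ) :
    0 ≤ Real.log (coverNum A ε).toReal := by
  rcases eq_or_ne (coverNum A ε) ⊤ with htop | htop
  · simp [htop]
  · exact Real.log_nonneg (by simpa using ENNReal.toReal_mono htop (one_le_coverNum hA ε))

lemma minkDims_le_of_coverNum_le_rpow {d : ℝ} (hd : 0 ≤ d)
    (h : ∀ s > d, ∃ C : ℝ, ∀ᶠ ε in 𝓝[>] 0, (coverNum A ε).toReal ≤ C * ε ^ (-s)) :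
    upperMinkDim A ≤ d ∧ lowerMinkDim A ≤ d := by
  rcases A.eq_empty_or_nonempty with hA | hA
  · simp [upperMinkDim, lowerMinkDim, hA, hd]
  simp only [upperMinkDim, lowerMinkDim, if_neg hA.ne_empty]
  set f := fun ε : ℝ => Real.log (coverNum A ε).toReal / -Real.log ε
  have hf_nonneg : ∀ᶠ ε in 𝓝[>] 0, 0 ≤ f ε :=
    eventually_of_mem (Ioo_mem_nhdsGT one_pos) fun ε hε =>
      div_nonneg (log_toReal_coverNum_nonneg hA ε) (neg_nonneg.mpr (Real.log_neg hε.1 hε.2).le)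
  have hf_le : ∀ s > d, ∀ᶠ ε in 𝓝[>] 0, f ε ≤ s := fun s hs =>
    let ⟨_, hC⟩ := h ((d + s) / 2) (by linarith)
    eventually_log_div_neg_log_le (fun _ => ENNReal.toReal_nonneg) (by linarith) (by linarith) hC
  have hlimsup : limsup f (𝓝[>] 0) ≤ d :=
    le_of_forall_gt_imp_ge_of_dense fun s hs =>
      limsup_le_of_le (isCoboundedUnder_le_of_eventually_le _ hf_nonneg) (hf_le s hs)
  refine ⟨hlimsup, (liminf_le_limsup ?_ ⟨0, hf_nonneg⟩).trans hlimsup⟩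
  exact ⟨d + 1, hf_le (d + 1) (by linarith)⟩

lemma minkDims_le_of_hasUniformCovering {j : ℕ} (hA : Bornology.IsBounded A) (C : ℝ)
    (h : ∀ κ : ℝ≥0, 0 < κ → κ ≤ 1 → ∃ r₀ : ℝ≥0, 0 < r₀ ∧ ∃ M : ℕ, (M : ℝ) ≤ (C / κ) ^ j ∧
      HasUniformCovering A r₀ κ M) :
    upperMinkDim A ≤ j ∧ lowerMinkDim A ≤ j := by
  refine minkDims_le_of_coverNum_le_rpow j.cast_nonneg fun s hs => ?_
  have hsmall : ∀ᶠ κ in 𝓝[>] (0 : ℝ), C ^ j ≤ κ ^ ((j : ℝ) - s) :=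
    (tendsto_rpow_neg_nhdsGT_zero (by linarith)).eventually_ge_atTop _
  obtain ⟨κ, hκC, hκ0, hκ1⟩ := (hsmall.and (Ioo_mem_nhdsGT one_pos)).exists
  lift κ to ℝ≥0 using hκ0.le
  obtain ⟨r₀, hr₀, M, hM, hU⟩ := h κ hκ0 hκ1.le
  have hMs : (M : ℝ) ≤ (κ : ℝ) ^ (-s) :=
    calc (M : ℝ) ≤ (C / κ) ^ j := hM
      _ = C ^ j * (κ : ℝ) ^ (-(j : ℝ)) := by
          rw [div_pow, Real.rpow_neg κ.coe_nonneg, Real.rpow_natCast, div_eq_mul_inv]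
      _ ≤ (κ : ℝ) ^ ((j : ℝ) - s) * (κ : ℝ) ^ (-(j : ℝ)) := by gcongr
      _ = (κ : ℝ) ^ (-s) := by
          rw [← Real.rpow_add hκ0]
          ring_nf
  obtain ⟨C', hC'⟩ :=
    hU.exists_coverNum_le_rpow hA hκ0 hκ1 hr₀ (by linarith [j.cast_nonneg (α := ℝ)]) hMs
  exact ⟨C', eventually_of_mem (Ioc_mem_nhdsGT (by positivity)) fun ε hε => hC' ε hε.1 hε.2⟩

end MinkowskiDimension

theorem minkowski_dim_le_general (n j : ℕ) (A : Set (EuclideanSpace ℝ (Fin n)))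
    (hA : RGamma .w .rho0 j Option.none A ∨
      ∃ γ : Option ℝ, memDelta γ ∧ RGamma .s .rho0 j γ A) :
    Bornology.IsBounded A ∧ upperMinkDim A ≤ j ∧ lowerMinkDim A ≤ j := by
  rcases hA with hfine | ⟨γ, hγ, hγA⟩
  · have hweak : ∀ δ ∈ Ioo (0 : ℝ) 1, RwRho0 j δ A := hfine
    have hbdd := (hweak (1 / 2) ⟨by norm_num, by norm_num⟩).isBounded_s8
    refine ⟨hbdd, minkDims_le_of_hasUniformCovering hbdd 9 fun κ hκ hκ1 => ?_⟩
    have hκ1' : (κ : ℝ) ≤ 1 := hκ1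
    exact (hweak (κ / 3) ⟨by positivity, by linarith⟩).hasUniformCovering hκ
      (hκ1.trans (by norm_num))
  · obtain ⟨δ, ⟨hδ0, hδ1⟩, hstrong⟩ : ∃ δ ∈ Ioo (0 : ℝ) 1, RsRho0 j δ A := by
      rcases hγ with rfl | ⟨δ, hδ, rfl⟩
      · exact ⟨1 / 2, ⟨by norm_num, by norm_num⟩, hγA (1 / 2) ⟨by norm_num, by norm_num⟩⟩
      · exact ⟨δ, hδ, hγA⟩
    refine ⟨hstrong.isBounded_s8,
      minkDims_le_of_hasUniformCovering hstrong.isBounded_s8 (3 / (1 - δ)) fun κ hκ hκ1 => ?_⟩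
    simpa only [div_mul_eq_div_div] using hstrong.hasUniformCovering hδ0.le hδ1 hκ hκ1

/-- a set with the `ρ0`-uniform fine weak property or a `ρ0`-uniform
strong Reifenberg property is bounded and has upper (hence lower) Minkowski
dimension at most `j`. -/
theorem minkowski_dim_le (n j : ℕ) (hj : j ≤ n) (A : Set (EuclideanSpace ℝ (Fin n)))
    (hA : RGamma .w .rho0 j Option.none A ∨
      ∃ γ : Option ℝ, memDelta γ ∧ RGamma .s .rho0 j γ A) :
    Bornology.IsBounded A ∧ upperMinkDim A ≤ j ∧ lowerMinkDim A ≤ j :=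
  minkowski_dim_le_general n j A hA

end ReifenbergPaper
end
end

section
/- Let j ∈ ℕ, j ≥ 1, and let N_j := ⋃_{i=1}^{∞} {i^{-1}} × [0,1]^j ⊆ ℝ^{j+1}. Then N_j ∈ R(s,ρ,fine;j), i.e. N_j satisfies the fine strong j-dimensional approximation property with local ρ_y-uniformity (and hence, in particular, a set satisfying this Reifenberg property can have lower and upper Minkowski dimension strictly greater than j). -/
open Metric Set MeasureTheory ENNReal NNReal

attribute [local instance] Classical.propDecidable

noncomputable section

namespace ReifenbergPaper

/-!
Since `i⁻¹ - (i + 1)⁻¹ = (i (i + 1))⁻¹`, a small enough ball around a point of the slice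
`{i⁻¹} × [0,1]^j` meets `N_j` only in that slice, hence inside the hyperplane `{x₀ = i⁻¹}`.
A set that lies locally in a `j`-plane is approximated by that plane with zero error at every
centre and scale near the point, which gives every `γ`-approximation at once.
-/

variable {n : ℕ}

lemma affPlane_eq_of_mem {x y : EuclideanSpace ℝ (Fin n)}
    {W : Submodule ℝ (EuclideanSpace ℝ (Fin n))} (hx : x ∈ affPlane y W) :
    affPlane x W = affPlane y W := by
  ext z
  simp only [affPlane, mem_ofPred_eq] at hx ⊢
  exact ⟨fun hz => by simpa using W.add_mem hz hx, fun hz => by simpa using W.sub_mem hz hx⟩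

lemma subset_nbhd (E : Set (EuclideanSpace ℝ (Fin n))) {r : ℝ} (hr : 0 ≤ r) :
    E ⊆ nbhd E r :=
  fun _ hz => (infDist_zero_of_mem hz).trans_le hr

theorem rsRho_of_locally_subset_affPlane {j : ℕ} {δ : ℝ} (hδ : 0 ≤ δ)
    {A : Set (EuclideanSpace ℝ (Fin n))}
    (hA : ∀ y ∈ A, ∃ r > (0:ℝ), ∃ W : Submodule ℝ (EuclideanSpace ℝ (Fin n)),
      Module.finrank ℝ W = j ∧ closedBall y r ∩ A ⊆ affPlane y W) :
    RsRho j δ A := by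
  intro y hy
  obtain ⟨r, hr, W, hW, hsub⟩ := hA y hy
  refine ⟨r / 2, by positivity, W, hW, ?_⟩
  rintro x ⟨hxy, hxA⟩ ρ ⟨hρ, hρr⟩
  have hball : closedBall x ρ ⊆ closedBall y r :=
    closedBall_subset_closedBall' (by rw [mem_closedBall] at hxy; linarith)
  have hx : x ∈ affPlane y W := hsub ⟨closedBall_subset_closedBall (by linarith) hxy, hxA⟩
  calc closedBall x ρ ∩ A ⊆ closedBall y r ∩ A := inter_subset_inter_left A hball
    _ ⊆ affPlane x W := (affPlane_eq_of_mem hx).symm ▸ hsub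
    _ ⊆ nbhd (affPlane x W) (δ * ρ) := subset_nbhd _ (by positivity)

def coordHyperplane (k : Fin n) : Submodule ℝ (EuclideanSpace ℝ (Fin n)) :=
  LinearMap.ker (EuclideanSpace.proj (𝕜 := ℝ) k).toLinearMap

lemma mem_affPlane_coordHyperplane {x z : EuclideanSpace ℝ (Fin n)} {k : Fin n} :
    z ∈ affPlane x (coordHyperplane k) ↔ z k = x k := by
  simp [affPlane, coordHyperplane, sub_eq_zero]

lemma finrank_coordHyperplane {j : ℕ} (k : Fin (j + 1)) :
    Module.finrank ℝ (coordHyperplane k) = j := by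
  have hsurj : Function.Surjective (EuclideanSpace.proj (𝕜 := ℝ) k).toLinearMap :=
    fun t => ⟨EuclideanSpace.single k t, by simp⟩
  have h :=
    LinearMap.finrank_range_add_finrank_ker (EuclideanSpace.proj (𝕜 := ℝ) k).toLinearMap
  rw [LinearMap.range_eq_top.mpr hsurj] at h
  simp only [finrank_top, Module.finrank_self, finrank_euclideanSpace, Fintype.card_fin] at h
  rw [coordHyperplane]
  omega

lemma inv_mul_succ_le_abs_inv_sub_inv {i i' : ℕ} (hi : 1 ≤ i) (hi' : 1 ≤ i') (h : i ≠ i') :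
    ((i : ℝ) * (i + 1))⁻¹ ≤ |(i' : ℝ)⁻¹ - (i : ℝ)⁻¹| := by
  have hi0 : (1 : ℝ) ≤ i := by exact_mod_cast hi
  have hi0' : (1 : ℝ) ≤ i' := by exact_mod_cast hi'
  rcases h.lt_or_gt with hlt | hgt
  · have hle : (i : ℝ) + 1 ≤ i' := by exact_mod_cast hlt
    rw [abs_sub_comm, le_abs]
    left
    rw [inv_sub_inv (by positivity) (by positivity), inv_eq_one_div,
      div_le_div_iff₀ (by positivity) (by positivity)]
    have : (0 : ℝ) ≤ i * i * (i' - i - 1) :=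
      mul_nonneg (by positivity) (by linarith)
    nlinarith
  · have hle : (i' : ℝ) + 1 ≤ i := by exact_mod_cast hgt
    rw [le_abs]
    left
    rw [inv_sub_inv (by positivity) (by positivity), inv_eq_one_div,
      div_le_div_iff₀ (by positivity) (by positivity)]
    have : (0 : ℝ) ≤ i * ((i - i' - 1) * (i + 1) + (i + 1 - i')) :=
      mul_nonneg (by positivity)
        (add_nonneg (mul_nonneg (by linarith) (by positivity)) (by linarith))
    nlinarith

lemma exists_closedBall_inter_NSet_subset_affPlane {j : ℕ} {y : EuclideanSpace ℝ (Fin (j + 1))}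
    (hy : y ∈ NSet j) :
    ∃ r > (0 : ℝ), closedBall y r ∩ NSet j ⊆ affPlane y (coordHyperplane 0) := by
  obtain ⟨i, hi, hy0, -⟩ := hy
  have hi0 : (0 : ℝ) < i := by exact_mod_cast hi
  refine ⟨((i : ℝ) * (i + 1))⁻¹ / 2, by positivity, ?_⟩
  rintro z ⟨hzy, i', hi', hz0, -⟩
  rw [mem_affPlane_coordHyperplane, hz0, hy0]
  by_contra hne
  have hgap := inv_mul_succ_le_abs_inv_sub_inv hi hi' fun h => hne (h ▸ rfl)
  have hdist : |(i' : ℝ)⁻¹ - (i : ℝ)⁻¹| ≤ ((i : ℝ) * (i + 1))⁻¹ / 2 := by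
    rw [← hz0, ← hy0, ← Real.dist_eq]
    exact (PiLp.dist_apply_le z y 0).trans (mem_closedBall.1 hzy)
  have : (0 : ℝ) < ((i : ℝ) * (i + 1))⁻¹ := by positivity
  linarith

theorem nset_fine_strong_rho_general (j : ℕ) :
    ∀ γ ∈ Set.Ioo (0:ℝ) 1, RsRho j γ (NSet j) := by
  intro γ hγ
  refine rsRho_of_locally_subset_affPlane hγ.1.le fun y hy => ?_
  obtain ⟨r, hr, hsub⟩ := exists_closedBall_inter_NSet_subset_affPlane hy
  exact ⟨r, hr, coordHyperplane 0, finrank_coordHyperplane 0, hsub⟩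

/-- `N_j = ⋃_{i≥1} {i⁻¹} × [0,1]^j ⊆ ℝ^{j+1}` satisfies the fine strong
`j`-dimensional approximation property with local `ρ_y`-uniformity. -/
theorem nset_fine_strong_rho (j : ℕ) (hj : 1 ≤ j) :
    ∀ γ ∈ Set.Ioo (0:ℝ) 1, RsRho j γ (NSet j) :=
  nset_fine_strong_rho_general j

end ReifenbergPaper
end
end

section
/- Let n ∈ ℕ and j ≤ n. There exists a function η : (0,1) → ℝ with η(t) → 0 as t → 0 such that for every δ₁ ∈ (0,1) and every A ⊆ ℝⁿ with A ∈ R(w,ρ,δ₁;j), the packing dimension of A satisfies dim_P A ≤ j + η(δ₁). -/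
open Metric Set MeasureTheory ENNReal NNReal

attribute [local instance] Classical.propDecidable

noncomputable section

namespace ReifenbergPaper

/-!
Fix `y ∈ A`. For `x ∈ A` near `y` and `ρ ≤ ρ_y`, the set `A ∩ B(x, ρ)` lies in the
`δρ`-neighbourhood of a `j`-plane, so a volume count on the plane covers it by `(7/δ)^j`
balls of radius `6δρ` centred in `A`. Iterating from `B(y, ρ_y)`, the set `A ∩ B(y, ρ_y)`
is covered by `(7/δ)^{jk}` balls of radius `(6δ)^k ρ_y`, so its upper Minkowski dimension is
at most `j log(7/δ) / log(1/(6δ)) = j + j log 42 / log(1/(6δ))`, which tends to `j` as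
`δ → 0`. Countably many such pieces cover `A`. For `δ ≥ 1/6` every set satisfies the
hypothesis with `j = n` and `δ = 1/12`, which gives a bound independent of `δ`.
-/

open Filter Topology Module

section PseudoMetricSpace

variable {X : Type*} [PseudoMetricSpace X]

theorem exists_finset_subset_cover_two_mul {S : Set X} {T : Finset X} {r : ℝ}
    (hT : S ⊆ ⋃ g ∈ T, closedBall g r) :
    ∃ T' : Finset X, ↑T' ⊆ S ∧ S ⊆ ⋃ b ∈ T', closedBall b (2 * r) ∧
      T'.card ≤ T.card := by
  set T₀ := T.filter fun g => (S ∩ closedBall g r).Nonempty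
  have hT₀ : ∀ g : T₀, (S ∩ closedBall g.1 r).Nonempty :=
    fun g => (Finset.mem_filter.1 g.2).2
  choose c hc using hT₀
  refine ⟨T₀.attach.image c, ?_, ?_, ?_⟩
  · intro b hb
    obtain ⟨g, -, rfl⟩ := Finset.mem_image.1 hb
    exact (hc g).1
  · intro a ha
    obtain ⟨g, hg, hag⟩ := mem_iUnion₂.1 (hT ha)
    set g₀ : T₀ := ⟨g, Finset.mem_filter.2 ⟨hg, a, ha, hag⟩⟩
    refine mem_iUnion₂.2 ⟨c g₀, Finset.mem_image_of_mem c (Finset.mem_attach _ _), ?_⟩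
    calc dist a (c g₀) ≤ dist a g + dist (c g₀) g := dist_triangle_right _ _ _
      _ ≤ r + r := add_le_add hag (hc g₀).2
      _ = 2 * r := by ring
  · calc (T₀.attach.image c).card ≤ T₀.attach.card := Finset.card_image_le
      _ ≤ T.card := by rw [Finset.card_attach]; exact Finset.card_filter_le _ _

theorem exists_finset_cover_pow {S : Set X} {y : X} {R c M : ℝ} (hy : y ∈ S)
    (hSR : S ⊆ closedBall y R) (hR : 0 < R) (hc : c ∈ Ioc 0 1)
    (hstep : ∀ a ∈ S, ∀ r ∈ Ioc 0 R, ∃ T : Finset X, ↑T ⊆ S ∧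
      S ∩ closedBall a r ⊆ ⋃ b ∈ T, closedBall b (c * r) ∧ (T.card : ℝ) ≤ M)
    (k : ℕ) :
    ∃ T : Finset X, ↑T ⊆ S ∧ S ⊆ ⋃ b ∈ T, closedBall b (c ^ k * R) ∧
      (T.card : ℝ) ≤ M ^ k := by
  induction k with
  | zero =>
    refine ⟨{y}, by simpa using hy, fun a ha => ?_, by simp⟩
    simpa using hSR ha
  | succ k ih =>
    obtain ⟨T, hTS, hTcov, hTcard⟩ := ih
    have hr : c ^ k * R ∈ Ioc 0 R :=
      ⟨by have := hc.1; positivity, mul_le_of_le_one_left hR.le (pow_le_one₀ hc.1.le hc.2)⟩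
    choose! F hFS hFcov hFcard using fun a (ha : a ∈ T) => hstep a (hTS ha) _ hr
    have hM : 0 ≤ M :=
      (Nat.cast_nonneg _).trans (hstep y hy R ⟨hR, le_rfl⟩).choose_spec.2.2
    refine ⟨T.biUnion F, ?_, ?_, ?_⟩
    · intro b hb
      obtain ⟨a, ha, hb⟩ := Finset.mem_biUnion.1 hb
      exact hFS a ha hb
    · intro s hs
      obtain ⟨a, ha, hsa⟩ := mem_iUnion₂.1 (hTcov hs)
      obtain ⟨b, hb, hsb⟩ := mem_iUnion₂.1 (hFcov a ha ⟨hs, hsa⟩)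
      refine mem_iUnion₂.2 ⟨b, Finset.mem_biUnion.2 ⟨a, ha, hb⟩, ?_⟩
      rwa [pow_succ, mul_comm (c ^ k), mul_assoc]
    · calc ((T.biUnion F).card : ℝ) ≤ ∑ a ∈ T, ((F a).card : ℝ) := by
            exact_mod_cast Finset.card_biUnion_le
        _ ≤ ∑ _a ∈ T, M := Finset.sum_le_sum hFcard
        _ = T.card * M := by rw [Finset.sum_const, nsmul_eq_mul]
        _ ≤ M ^ k * M := by gcongr
        _ = M ^ (k + 1) := (pow_succ M k).symm

end PseudoMetricSpace

theorem exists_pow_mul_le {c a ε : ℝ} (hc0 : 0 < c) (hc1 : c < 1) (hε : 0 < ε)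
    (hεa : ε ≤ a) :
    ∃ k : ℕ, c ^ k * a ≤ ε ∧ (k : ℝ) ≤ Real.log (a / ε) / Real.log (1 / c) + 1 := by
  have hL : 0 < Real.log (1 / c) := Real.log_pos (one_lt_one_div hc0 hc1)
  have hx : 0 ≤ Real.log (a / ε) / Real.log (1 / c) :=
    div_nonneg (Real.log_nonneg ((le_div_iff₀ hε).2 (by linarith))) hL.le
  set k := ⌈Real.log (a / ε) / Real.log (1 / c)⌉₊
  refine ⟨k, ?_, (Nat.ceil_lt_add_one hx).le⟩
  have hk : Real.log (a / ε) ≤ k * Real.log (1 / c) := (div_le_iff₀ hL).1 (Nat.le_ceil _)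
  have hck : c ^ k ≤ ε / a := by
    rw [← Real.log_le_log_iff (by positivity) (by linarith [div_pos hε (hε.trans_le hεa)]),
      Real.log_pow]
    rw [one_div, Real.log_inv] at hk
    rw [Real.log_div hε.ne' (by linarith), ← neg_sub, ← Real.log_div (by linarith) hε.ne']
    linarith
  exact (le_div_iff₀ (hε.trans_le hεa)).1 hck

theorem tendsto_log_one_div_mul_nhdsGT_zero {c : ℝ} (hc : 0 < c) :
    Tendsto (fun δ : ℝ => Real.log (1 / (c * δ))) (𝓝[>] 0) atTop := by
  refine ((tendsto_neg_atBot_atTop.comp Real.tendsto_log_nhdsGT_zero).atTop_add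
    (tendsto_const_nhds (x := -Real.log c))).congr' ?_
  filter_upwards [self_mem_nhdsWithin] with δ (hδ : 0 < δ)
  rw [one_div, Real.log_inv, Real.log_mul hc.ne' hδ.ne', Function.comp_apply]
  ring

section FiniteDimensional

variable {E : Type*} [NormedAddCommGroup E] [NormedSpace ℝ E] [FiniteDimensional ℝ E]

theorem card_mul_pow_le_of_pairwise_le_dist (t : Finset E) {c : E} {R ε : ℝ} (hR : 0 ≤ R)
    (hε : 0 < ε) (ht : ∀ a ∈ t, dist a c ≤ R)
    (hsep : (t : Set E).Pairwise fun a b => ε ≤ dist a b) :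
    (t.card : ℝ) * ε ^ finrank ℝ E ≤ (2 * R + ε) ^ finrank ℝ E := by
  borelize E
  set μ : Measure E := Measure.addHaar
  -- compare the volume of the disjoint `ε / 2`-balls around `t` with that of `B(c, R + ε / 2)`
  have hdisj : (t : Set E).PairwiseDisjoint fun a => ball a (ε / 2) := fun a ha b hb hab =>
    ball_disjoint_ball (by linarith [hsep ha hb hab])
  have hsub : ⋃ a ∈ t, ball a (ε / 2) ⊆ ball c (R + ε / 2) :=
    iUnion₂_subset fun a ha => ball_subset_ball' (by linarith [ht a ha])
  have hvol : (t.card : ℝ≥0∞) * ENNReal.ofReal ((ε / 2) ^ finrank ℝ E) * μ (ball 0 1) ≤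
      ENNReal.ofReal ((R + ε / 2) ^ finrank ℝ E) * μ (ball 0 1) :=
    calc (t.card : ℝ≥0∞) * ENNReal.ofReal ((ε / 2) ^ finrank ℝ E) * μ (ball 0 1)
        = μ (⋃ a ∈ t, ball a (ε / 2)) := by
          rw [measure_biUnion_finset hdisj fun a _ => measurableSet_ball]
          simp only [μ.addHaar_ball_of_pos _ (half_pos hε), Finset.sum_const, nsmul_eq_mul,
            mul_assoc]
      _ ≤ μ (ball c (R + ε / 2)) := measure_mono hsub
      _ = ENNReal.ofReal ((R + ε / 2) ^ finrank ℝ E) * μ (ball 0 1) :=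
          μ.addHaar_ball_of_pos _ (by linarith)
  have hcancel := (ENNReal.mul_le_mul_iff_left (measure_ball_pos μ (0 : E) one_pos).ne'
    measure_ball_lt_top.ne).1 hvol
  have hreal : (t.card : ℝ) * (ε / 2) ^ finrank ℝ E ≤ (R + ε / 2) ^ finrank ℝ E := by
    have := ENNReal.toReal_le_of_le_ofReal (by positivity) hcancel
    rwa [ENNReal.toReal_mul, ENNReal.toReal_ofReal (by positivity), ENNReal.toReal_natCast]
      at this
  calc (t.card : ℝ) * ε ^ finrank ℝ E
      = 2 ^ finrank ℝ E * ((t.card : ℝ) * (ε / 2) ^ finrank ℝ E) := by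
        rw [div_pow]; field_simp
    _ ≤ 2 ^ finrank ℝ E * (R + ε / 2) ^ finrank ℝ E := by gcongr
    _ = (2 * R + ε) ^ finrank ℝ E := by rw [← mul_pow]; ring_nf

theorem exists_finset_closedBall_cover (c : E) {R ε : ℝ} (hR : 0 ≤ R) (hε : 0 < ε) :
    ∃ T : Finset E, closedBall c R ⊆ ⋃ b ∈ T, closedBall b ε ∧
      (T.card : ℝ) * ε ^ finrank ℝ E ≤ (2 * R + ε) ^ finrank ℝ E := by
  set ε' : ℝ≥0 := ε.toNNReal
  set N : ℕ := ⌊(2 * R + ε) ^ finrank ℝ E / ε ^ finrank ℝ E⌋₊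
  have hcard : ∀ t : Finset E, (t : Set E) ⊆ closedBall c R →
      IsSeparated ε' (t : Set E) → t.card ≤ N := by
    intro t htR hsep
    refine Nat.le_floor ((le_div_iff₀ (by positivity)).2 ?_)
    refine card_mul_pow_le_of_pairwise_le_dist t hR hε (fun a ha => htR ha) ?_
    intro a ha b hb hab
    have h : ENNReal.ofReal ε < ENNReal.ofReal (dist a b) := by
      rw [← edist_dist]; exact hsep ha hb hab
    exact ((ENNReal.ofReal_lt_ofReal_iff_of_nonneg hε.le).1 h).le
  have hpack : packingNumber ε' (closedBall c R) ≤ N := by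
    refine iSup₂_le fun C hC => iSup_le fun hsep => ?_
    by_contra! hlt
    obtain ⟨t, htC, ht⟩ := Set.exists_subset_encard_eq (Order.add_one_le_of_lt hlt)
    have htfin : t.Finite := Set.finite_of_encard_eq_coe ht
    have := hcard htfin.toFinset (by simpa using htC.trans hC) (by simpa using hsep.subset htC)
    rw [← Set.ncard_eq_toFinset_card _ htfin] at this
    have h2 := Set.Finite.cast_ncard_eq htfin
    rw [ht] at h2
    norm_cast at h2
    omega
  have hfin : packingNumber ε' (closedBall c R) ≠ ⊤ := ne_top_of_le_ne_top (by simp) hpack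
  set C := maximalSeparatedSet ε' (closedBall c R)
  have hCfin : C.Finite :=
    Set.encard_ne_top_iff.1 (by rwa [encard_maximalSeparatedSet hfin])
  refine ⟨hCfin.toFinset, ?_, ?_⟩
  · have := isCover_maximalSeparatedSet hfin
    rw [isCover_iff_subset_iUnion_closedBall] at this
    simpa [ε', hε.le] using this
  · have : (hCfin.toFinset.card : ℕ∞) ≤ N := by
      rw [← Set.encard_coe_eq_coe_finsetCard]
      simpa [C, encard_maximalSeparatedSet hfin] using hpack
    have hN : (hCfin.toFinset.card : ℝ) ≤ (2 * R + ε) ^ finrank ℝ E / ε ^ finrank ℝ E :=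
      (Nat.cast_le.2 (by exact_mod_cast this)).trans (Nat.floor_le (by positivity))
    rwa [le_div_iff₀ (by positivity)] at hN

end FiniteDimensional

section Euclidean

variable {n j : ℕ}

theorem coverNum_le_card_of_subset_iUnion_closedBall {S : Set (EuclideanSpace ℝ (Fin n))}
    {T : Finset (EuclideanSpace ℝ (Fin n))} {r ε : ℝ}
    (h : S ⊆ ⋃ a ∈ T, closedBall a r) (hr : 0 ≤ r) (hε : 2 * r ≤ ε) :
    coverNum S ε ≤ T.card := by
  have hc : S ⊆ ⋃ t ∈ T.image (closedBall · r), t := by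
    simpa only [Finset.set_biUnion_finset_image] using h
  have hd : ∀ t ∈ T.image (closedBall · r), diam t ≤ ε := by
    intro t ht
    obtain ⟨a, -, rfl⟩ := Finset.mem_image.1 ht
    exact (diam_closedBall hr).trans hε
  calc coverNum S ε ≤ (T.image (closedBall · r)).card :=
        iInf_le_of_le _ (iInf_le_of_le hc (iInf_le_of_le hd le_rfl))
    _ ≤ T.card := by exact_mod_cast Finset.card_image_le

theorem one_le_coverNum_s12 {S : Set (EuclideanSpace ℝ (Fin n))} (hS : S.Nonempty) (ε : ℝ) :
    1 ≤ coverNum S ε := by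
  refine le_iInf fun s => le_iInf fun hc => le_iInf fun _ => ?_
  obtain ⟨x, hx⟩ := hS
  obtain ⟨t, ht, -⟩ := mem_iUnion₂.1 (hc hx)
  exact_mod_cast Finset.card_pos.2 ⟨t, ht⟩

theorem log_coverNum_nonneg {S : Set (EuclideanSpace ℝ (Fin n))} (hS : S.Nonempty) (ε : ℝ) :
    0 ≤ Real.log (coverNum S ε).toReal := by
  by_cases h : coverNum S ε = ⊤
  · simp [h]
  · exact Real.log_nonneg (by simpa using ENNReal.toReal_mono h (one_le_coverNum_s12 hS ε))

theorem upperMinkDim_nonneg (S : Set (EuclideanSpace ℝ (Fin n))) : 0 ≤ upperMinkDim S := by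
  by_cases hS : S = ∅
  · simp [upperMinkDim, hS]
  rw [upperMinkDim, if_neg hS, limsup_eq]
  refine Real.sInf_nonneg fun a ha => ?_
  have hf : ∀ᶠ ε in 𝓝[>] (0 : ℝ),
      0 ≤ Real.log (coverNum S ε).toReal / (-Real.log ε) := by
    filter_upwards [Ioo_mem_nhdsGT one_pos] with ε hε
    exact div_nonneg (log_coverNum_nonneg (nonempty_iff_ne_empty.2 hS) ε)
      (neg_nonneg.2 (Real.log_nonpos hε.1.le hε.2.le))
  obtain ⟨ε, h1, h2⟩ := ((show ∀ᶠ ε in 𝓝[>] (0 : ℝ), _ ≤ a from ha).and hf).exists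
  exact h2.trans h1

theorem upperMinkDim_le_of_cover_pow {S : Set (EuclideanSpace ℝ (Fin n))} (hS : S.Nonempty)
    {R c M : ℝ} (hR : 0 < R) (hc0 : 0 < c) (hc1 : c < 1) (hM : 1 ≤ M)
    (hcov : ∀ k : ℕ, ∃ T : Finset (EuclideanSpace ℝ (Fin n)),
      S ⊆ ⋃ b ∈ T, closedBall b (c ^ k * R) ∧ (T.card : ℝ) ≤ M ^ k) :
    upperMinkDim S ≤ Real.log M / Real.log (1 / c) := by
  set L := Real.log (1 / c)
  have hL : 0 < L := Real.log_pos (one_lt_one_div hc0 hc1)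
  set D := Real.log M / L
  set f := fun ε : ℝ => Real.log (coverNum S ε).toReal / (-Real.log ε)
  set g := fun ε : ℝ => D + D * (Real.log (2 * R) + L) / (-Real.log ε)
  have hsmall : Ioo (0 : ℝ) (min 1 (2 * R)) ∈ 𝓝[>] 0 :=
    Ioo_mem_nhdsGT (lt_min one_pos (by positivity))
  have hfg : f ≤ᶠ[𝓝[>] 0] g := by
    filter_upwards [hsmall] with ε hε
    have hε1 : ε < 1 := hε.2.trans_le (min_le_left _ _)
    have hlogε : 0 < -Real.log ε := neg_pos.2 (Real.log_neg hε.1 hε1)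
    obtain ⟨k, hkε, hk⟩ :=
      exists_pow_mul_le hc0 hc1 hε.1 (hε.2.trans_le (min_le_right _ _)).le
    obtain ⟨T, hT, hTcard⟩ := hcov k
    have hN : coverNum S ε ≤ T.card :=
      coverNum_le_card_of_subset_iUnion_closedBall hT (by positivity) (by linarith)
    have hNT : (coverNum S ε).toReal ≤ T.card := by
      simpa using ENNReal.toReal_mono (ENNReal.natCast_ne_top _) hN
    have hNpos : 0 < (coverNum S ε).toReal := ENNReal.toReal_pos
      (one_le_coverNum_s12 hS ε |>.trans_lt' one_pos).ne' (ne_top_of_le_ne_top (by simp) hN)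
    have hlog : Real.log (coverNum S ε).toReal ≤
        (Real.log (2 * R / ε) / L + 1) * Real.log M :=
      calc Real.log (coverNum S ε).toReal ≤ Real.log (M ^ k) :=
            Real.log_le_log hNpos (hNT.trans hTcard)
        _ = k * Real.log M := Real.log_pow _ _
        _ ≤ _ := mul_le_mul_of_nonneg_right hk (Real.log_nonneg hM)
    calc f ε ≤ (Real.log (2 * R / ε) / L + 1) * Real.log M / (-Real.log ε) :=
          div_le_div_of_nonneg_right hlog hlogε.le
      _ = g ε := by
          rw [Real.log_div (by positivity) hε.1.ne']
          have : Real.log ε ≠ 0 := by linarith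
          simp only [g, D]
          field_simp
          ring
  have hg : Tendsto g (𝓝[>] 0) (𝓝 D) := by
    have := (tendsto_const_nhds (x := D * (Real.log (2 * R) + L))).div_atTop
      (tendsto_neg_atBot_atTop.comp Real.tendsto_log_nhdsGT_zero)
    simpa using (tendsto_const_nhds (x := D)).add this
  have hf0 : ∀ᶠ ε in 𝓝[>] (0 : ℝ), 0 ≤ f ε := by
    filter_upwards [Ioo_mem_nhdsGT one_pos] with ε hε
    exact div_nonneg (log_coverNum_nonneg hS ε) (neg_nonneg.2 (Real.log_nonpos hε.1.le hε.2.le))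
  rw [upperMinkDim, if_neg hS.ne_empty]
  exact (limsup_le_limsup hfg (isCoboundedUnder_le_of_eventually_le _ hf0)
    hg.isBoundedUnder_le).trans_eq hg.limsup_eq

theorem packDim_le_of_countable_sUnion {A : Set (EuclideanSpace ℝ (Fin n))}
    {𝒮 : Set (Set (EuclideanSpace ℝ (Fin n)))} (h𝒮 : 𝒮.Countable) (hA : A = ⋃₀ 𝒮)
    (hb : ∀ s ∈ 𝒮, Bornology.IsBounded s) {d : ℝ}
    (hd : ∀ s ∈ 𝒮, upperMinkDim s ≤ d) (hd0 : 0 ≤ d) : packDim A ≤ d := by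
  -- adjoining `∅` makes the family nonempty, so that it can be enumerated by `ℕ`
  obtain ⟨F, hF⟩ := (h𝒮.insert ∅).exists_eq_range (insert_nonempty _ _)
  have hFmem : ∀ i, F i = ∅ ∨ F i ∈ 𝒮 := fun i => show F i ∈ insert ∅ 𝒮 by
    rw [hF]; exact mem_range_self i
  refine csInf_le ⟨0, ?_⟩ ⟨F, ?_, fun i => ?_, fun i => ?_⟩
  · rintro d' ⟨F', -, -, hd'⟩
    exact (upperMinkDim_nonneg _).trans (hd' 0)
  · rw [hA, ← sUnion_range, ← hF, sUnion_insert, empty_union]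
  · rcases hFmem i with h | h
    · simp [h]
    · exact hb _ h
  · rcases hFmem i with h | h
    · simpa [h, upperMinkDim] using hd0
    · exact hd _ h

theorem exists_finset_affPlane_cover {W : Submodule ℝ (EuclideanSpace ℝ (Fin n))}
    (hW : finrank ℝ W = j) (x : EuclideanSpace ℝ (Fin n)) {r ε : ℝ} (hr : 0 ≤ r)
    (hε : 0 < ε) :
    ∃ T : Finset (EuclideanSpace ℝ (Fin n)),
      affPlane x W ∩ closedBall x r ⊆ ⋃ g ∈ T, closedBall g ε ∧
        (T.card : ℝ) * ε ^ j ≤ (2 * r + ε) ^ j := by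
  obtain ⟨T, hT, hcard⟩ := exists_finset_closedBall_cover (0 : W) hr hε
  rw [hW] at hcard
  refine ⟨T.image fun w : W => x + (w : EuclideanSpace ℝ (Fin n)), fun z hz => ?_,
    hcard.trans' ?_⟩
  · set w : W := ⟨z - x, hz.1⟩
    have hw : w ∈ closedBall (0 : W) r := by
      simpa [w, dist_eq_norm] using hz.2
    obtain ⟨b, hb, hwb⟩ := mem_iUnion₂.1 (hT hw)
    refine mem_iUnion₂.2 ⟨x + b, Finset.mem_image_of_mem _ hb, ?_⟩
    rw [mem_closedBall, dist_eq_norm, show z - (x + b) = (w : _) - b by simp [w]; abel,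
      ← dist_eq_norm]
    exact hwb
  · gcongr
    exact_mod_cast Finset.card_image_le

theorem exists_finset_cover_of_subset_nbhd_affPlane {S : Set (EuclideanSpace ℝ (Fin n))}
    {x : EuclideanSpace ℝ (Fin n)} {W : Submodule ℝ (EuclideanSpace ℝ (Fin n))}
    (hW : finrank ℝ W = j) {ρ δ : ℝ} (hρ : 0 < ρ) (hδ : 0 < δ) (hδ1 : δ ≤ 1)
    (hflat : S ∩ closedBall x ρ ⊆ nbhd (affPlane x W) (δ * ρ)) :
    ∃ T : Finset (EuclideanSpace ℝ (Fin n)), ↑T ⊆ S ∧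
      S ∩ closedBall x ρ ⊆ ⋃ b ∈ T, closedBall b (6 * δ * ρ) ∧
        (T.card : ℝ) ≤ (7 / δ) ^ j := by
  obtain ⟨T₀, hT₀, hcard⟩ :=
    exists_finset_affPlane_cover hW x (r := 3 * ρ) (by positivity) (mul_pos hδ hρ)
  have hext : S ∩ closedBall x ρ ⊆ ⋃ g ∈ T₀, closedBall g (3 * δ * ρ) := by
    intro a ha
    have hne : (affPlane x W).Nonempty := ⟨x, by simp [affPlane]⟩
    obtain ⟨p, hp, hap⟩ := (infDist_lt_iff hne).1
      ((hflat ha).trans_lt (by nlinarith : δ * ρ < 2 * δ * ρ))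
    have hpx : p ∈ closedBall x (3 * ρ) := by
      have := dist_triangle_left p x a
      have := mem_closedBall.1 ha.2
      rw [mem_closedBall]; nlinarith
    obtain ⟨g, hg, hpg⟩ := mem_iUnion₂.1 (hT₀ ⟨hp, hpx⟩)
    refine mem_iUnion₂.2 ⟨g, hg, ?_⟩
    have := dist_triangle a p g
    rw [mem_closedBall] at hpg ⊢; linarith
  obtain ⟨T, hTS, hTcov, hTcard⟩ := exists_finset_subset_cover_two_mul hext
  refine ⟨T, hTS.trans inter_subset_left, ?_, ?_⟩
  · rwa [show 6 * δ * ρ = 2 * (3 * δ * ρ) by ring]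
  have h7 : (T₀.card : ℝ) * δ ^ j * ρ ^ j ≤ 7 ^ j * ρ ^ j := by
    calc (T₀.card : ℝ) * δ ^ j * ρ ^ j = T₀.card * (δ * ρ) ^ j := by ring
      _ ≤ (2 * (3 * ρ) + δ * ρ) ^ j := hcard
      _ ≤ (7 * ρ) ^ j := by gcongr; nlinarith
      _ = 7 ^ j * ρ ^ j := mul_pow _ _ _
  calc (T.card : ℝ) ≤ T₀.card := by exact_mod_cast hTcard
    _ ≤ (7 / δ) ^ j := by
      rw [div_pow, le_div_iff₀ (by positivity)]
      exact le_of_mul_le_mul_right h7 (by positivity)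

theorem upperMinkDim_inter_closedBall_le {A : Set (EuclideanSpace ℝ (Fin n))}
    {y : EuclideanSpace ℝ (Fin n)} {ρy δ : ℝ} (hy : y ∈ A) (hρy : 0 < ρy) (hδ : 0 < δ)
    (hδ6 : δ < 1 / 6)
    (hflat : ∀ x ∈ closedBall y ρy ∩ A, ∀ ρ ∈ Ioc 0 ρy,
      ∃ W : Submodule ℝ (EuclideanSpace ℝ (Fin n)), finrank ℝ W = j ∧
        closedBall x ρ ∩ A ⊆ nbhd (affPlane x W) (δ * ρ)) :
    upperMinkDim (A ∩ closedBall y ρy) ≤ j + j * Real.log 42 / Real.log (1 / (6 * δ)) := by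
  set S := A ∩ closedBall y ρy
  have hyS : y ∈ S := ⟨hy, mem_closedBall_self hρy.le⟩
  have hstep : ∀ a ∈ S, ∀ r ∈ Ioc 0 ρy, ∃ T : Finset (EuclideanSpace ℝ (Fin n)),
      ↑T ⊆ S ∧ S ∩ closedBall a r ⊆ ⋃ b ∈ T, closedBall b (6 * δ * r) ∧
        (T.card : ℝ) ≤ (7 / δ) ^ j := by
    intro a ha r hr
    obtain ⟨W, hW, hWa⟩ := hflat a ⟨ha.2, ha.1⟩ r hr
    exact exists_finset_cover_of_subset_nbhd_affPlane hW hr.1 hδ (by linarith)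
      fun z hz => hWa ⟨hz.2, hz.1.1⟩
  have hcov := exists_finset_cover_pow hyS inter_subset_right hρy
    ⟨by positivity, by linarith⟩ hstep
  have hM : 1 ≤ (7 / δ) ^ j := one_le_pow₀ ((le_div_iff₀ hδ).2 (by linarith))
  have hL : 0 < Real.log (1 / (6 * δ)) :=
    Real.log_pos (one_lt_one_div (by positivity) (by linarith))
  refine (upperMinkDim_le_of_cover_pow ⟨y, hyS⟩ hρy (by positivity) (by linarith) hM
    fun k => (hcov k).imp fun _ hT => hT.2).trans_eq ?_
  rw [Real.log_pow, show 7 / δ = 42 * (1 / (6 * δ)) by field_simp; norm_num,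
    Real.log_mul (by norm_num) (by positivity)]
  field_simp
  ring

theorem packDim_le_of_rwRho {A : Set (EuclideanSpace ℝ (Fin n))} {δ : ℝ} (hδ : 0 < δ)
    (hδ6 : δ < 1 / 6) (hA : RwRho j δ A) :
    packDim A ≤ j + j * Real.log 42 / Real.log (1 / (6 * δ)) := by
  choose! ρ hρ hflat using hA
  obtain ⟨t, htA, htc, htcov⟩ := TopologicalSpace.countable_cover_nhdsWithin
    fun y hy => mem_nhdsWithin_of_mem_nhds (closedBall_mem_nhds y (hρ y hy))
  refine packDim_le_of_countable_sUnion (htc.image fun y => A ∩ closedBall y (ρ y))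
    ?_ ?_ ?_ ?_
  · rw [sUnion_image]
    refine Subset.antisymm (fun a ha => ?_) (iUnion₂_subset fun _ _ => inter_subset_left)
    obtain ⟨y, hy, hay⟩ := mem_iUnion₂.1 (htcov ha)
    exact mem_iUnion₂.2 ⟨y, hy, ha, hay⟩
  · rintro _ ⟨y, -, rfl⟩
    exact isBounded_closedBall.subset inter_subset_right
  · rintro _ ⟨y, hy, rfl⟩
    exact upperMinkDim_inter_closedBall_le (htA hy) (hρ y (htA hy)) hδ hδ6 (hflat y (htA hy))
  · have hL : 0 < Real.log (1 / (6 * δ)) :=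
      Real.log_pos (one_lt_one_div (by positivity) (by linarith))
    have : 0 < Real.log 42 := Real.log_pos (by norm_num)
    positivity

theorem rwRho_ambient {δ : ℝ} (hδ : 0 ≤ δ) (A : Set (EuclideanSpace ℝ (Fin n))) :
    RwRho n δ A :=
  fun _ _ => ⟨1, one_pos, fun x _ ρ hρ => ⟨⊤, by simp, fun z _ => by
    rw [show z ∈ nbhd _ _ ↔ infDist z _ ≤ _ from Iff.rfl,
      infDist_zero_of_mem (by simp [affPlane])]
    exact mul_nonneg hδ hρ.1.le⟩⟩

end Euclidean

/-- there is a function `η` with `η(t) → 0` as `t → 0⁺` such that any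
set with the weak `ρ_y`-uniform `δ₁`-approximation property has packing dimension at
most `j + η δ₁`. -/
theorem packing_dim_bound (n j : ℕ) (hj : j ≤ n) :
    ∃ η : ℝ → ℝ, Filter.Tendsto η (nhdsWithin 0 (Set.Ioi 0)) (nhds 0) ∧
      ∀ δ₁ ∈ Set.Ioo (0:ℝ) 1, ∀ A : Set (EuclideanSpace ℝ (Fin n)),
        RwRho j δ₁ A → packDim A ≤ (j : ℝ) + η δ₁ := by
  refine ⟨fun δ => if δ < 1 / 6 then j * Real.log 42 / Real.log (1 / (6 * δ))
    else (n - j) + n * Real.log 42 / Real.log 2, ?_, fun δ hδ A hA => ?_⟩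
  · refine ((tendsto_const_nhds (x := (j : ℝ) * Real.log 42)).div_atTop
      (tendsto_log_one_div_mul_nhdsGT_zero (c := 6) (by norm_num))).congr' ?_
    filter_upwards [Ioo_mem_nhdsGT (by norm_num : (0 : ℝ) < 1 / 6)] with δ hδ
    rw [if_pos hδ.2]
  · beta_reduce
    split_ifs with hδ6
    · exact packDim_le_of_rwRho hδ.1 hδ6 hA
    · have hn := packDim_le_of_rwRho (by norm_num) (by norm_num)
        (rwRho_ambient (by norm_num : (0 : ℝ) ≤ 1 / 12) A)
      norm_num at hn
      have hjn : (j : ℝ) ≤ n := by exact_mod_cast hj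
      linarith

end ReifenbergPaper
end
end

section
/- Let n ∈ ℕ, j ≤ n, let L ⊆ ℝⁿ be a j-dimensional linear subspace, let g : L → L^⊥ be Lipschitz with Lipschitz constant M, let G := graph(g) = {x + g(x) : x ∈ L}, and let p ∈ G. Then for every ρ > 0, H^j(B_ρ(p) ∩ G) ≥ κ_j · (ρ/√(1+M²))^j, where H^j denotes j-dimensional Hausdorff measure on ℝⁿ and κ_j := H^j of the closed unit ball in ℝ^j. -/
open Metric Set MeasureTheory ENNReal NNReal

attribute [local instance] Classical.propDecidable

noncomputable section

namespace ReifenbergPaper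

/-! The map `x ↦ x + g x` from `W` onto the graph is `1`-antilipschitz by Pythagoras (its two
summands are orthogonal) and `√(1 + M²)`-Lipschitz. Hence it carries the ball of radius
`ρ / √(1 + M²)` of `W ≅ ℝʲ` about the foot of `p` into `B_ρ(p) ∩ G` without decreasing `Hʲ`,
and that ball has measure `κ_j (ρ / √(1 + M²))ʲ` by translation and scaling. -/

open scoped Pointwise

theorem hausdorffMeasure_closedBall {E : Type*} [NormedAddCommGroup E] [NormedSpace ℝ E]
    [MeasurableSpace E] [BorelSpace E] {d : ℝ} (hd : 0 ≤ d) (x : E) {r : ℝ} (hr : 0 < r) :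
    μH[d] (closedBall x r) = μH[d] (closedBall (0 : E) 1) * ENNReal.ofReal (r ^ d) := by
  have hball : closedBall x r = x +ᵥ r • closedBall (0 : E) 1 := by
    rw [smul_unitClosedBall_of_nonneg hr.le, vadd_closedBall, vadd_eq_add, add_zero]
  rw [hball, hausdorffMeasure_vadd _ (Or.inl hd), Measure.hausdorffMeasure_smul₀ hd hr.ne',
    ENNReal.smul_def, smul_eq_mul, mul_comm, ← ofReal_coe_nnreal, NNReal.coe_rpow, coe_nnnorm,
    Real.norm_of_nonneg hr.le]

section Graph

variable {E : Type*} [NormedAddCommGroup E] [InnerProductSpace ℝ E]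
  (W : Submodule ℝ E) (g : W → Wᗮ)

def graphMap (x : W) : E := x + g x

theorem norm_graphMap_sub_sq (x y : W) :
    ‖graphMap W g x - graphMap W g y‖ ^ 2 = ‖x - y‖ ^ 2 + ‖g x - g y‖ ^ 2 := by
  have hsplit : graphMap W g x - graphMap W g y = ((x - y : W) : E) + ((g x - g y : Wᗮ) : E) := by
    simp only [graphMap, Submodule.coe_sub]
    abel
  rw [hsplit, norm_add_sq_real,
    Submodule.inner_right_of_mem_orthogonal (x - y).2 (g x - g y).2, mul_zero, add_zero]
  rfl

theorem antilipschitzWith_graphMap : AntilipschitzWith 1 (graphMap W g) :=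
  AntilipschitzWith.of_le_mul_dist fun x y => by
    rw [NNReal.coe_one, one_mul, dist_eq_norm, dist_eq_norm,
      ← pow_le_pow_iff_left₀ (norm_nonneg _) (norm_nonneg _) two_ne_zero, norm_graphMap_sub_sq]
    exact le_add_of_nonneg_right (sq_nonneg _)

theorem lipschitzWith_graphMap {M : ℝ≥0} (hg : LipschitzWith M g) :
    LipschitzWith (NNReal.sqrt (1 + M ^ 2)) (graphMap W g) :=
  LipschitzWith.of_dist_le_mul fun x y => by
    have hgxy : ‖g x - g y‖ ≤ M * ‖x - y‖ := by
      simpa only [dist_eq_norm] using hg.dist_le_mul x y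
    rw [dist_eq_norm, dist_eq_norm, Real.coe_sqrt,
      ← pow_le_pow_iff_left₀ (norm_nonneg _) (by positivity) two_ne_zero, mul_pow,
      Real.sq_sqrt (by positivity), norm_graphMap_sub_sq]
    push_cast
    nlinarith [norm_nonneg (g x - g y), norm_nonneg (x - y), M.coe_nonneg]

end Graph

theorem hausdorff_lower_bound_on_graph_general (n j : ℕ)
    (W : Submodule ℝ (EuclideanSpace ℝ (Fin n))) (hW : Module.finrank ℝ W = j)
    (M : ℝ≥0) (g : W → Wᗮ) (hg : LipschitzWith M g)
    (p : EuclideanSpace ℝ (Fin n)) (hp : p ∈ lipGraph W g) (ρ : ℝ) (hρ : 0 < ρ) :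
    μH[(j : ℝ)] (Metric.closedBall (0 : EuclideanSpace ℝ (Fin j)) 1) *
        ENNReal.ofReal ((ρ / Real.sqrt (1 + (M : ℝ) ^ 2)) ^ j) ≤
      μH[(j : ℝ)] (Metric.closedBall p ρ ∩ lipGraph W g) := by
  obtain ⟨x₀, rfl⟩ := hp
  set K := NNReal.sqrt (1 + M ^ 2)
  have hK : Real.sqrt (1 + (M : ℝ) ^ 2) = K := by simp [K]
  have hKpos : (0 : ℝ) < K := by rw [← hK]; positivity
  let e : EuclideanSpace ℝ (Fin j) ≃ₗᵢ[ℝ] W :=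
    ((stdOrthonormalBasis ℝ W).reindex (finCongr hW)).repr.symm
  let f := graphMap W g ∘ e
  have hf_anti : AntilipschitzWith 1 f := by
    simpa using (antilipschitzWith_graphMap W g).comp e.antilipschitz
  have hf_lip : LipschitzWith K f := by
    simpa using (lipschitzWith_graphMap W g hg).comp e.lipschitz
  have hf_center : f (e.symm x₀) = graphMap W g x₀ := by simp [f]
  set r := ρ / K
  have hKr : K * r = ρ := mul_div_cancel₀ ρ hKpos.ne'
  rw [hK]
  calc μH[(j : ℝ)] (closedBall (0 : EuclideanSpace ℝ (Fin j)) 1) * ENNReal.ofReal (r ^ j)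
      = μH[(j : ℝ)] (closedBall (e.symm x₀) r) := by
        rw [hausdorffMeasure_closedBall (Nat.cast_nonneg j) _ (div_pos hρ hKpos),
          Real.rpow_natCast]
    _ ≤ μH[(j : ℝ)] (f '' closedBall (e.symm x₀) r) := by
        simpa using hf_anti.le_hausdorffMeasure_image (Nat.cast_nonneg j) _
    _ ≤ μH[(j : ℝ)] (closedBall (graphMap W g x₀) ρ ∩ lipGraph W g) := by
        refine measure_mono (image_subset_iff.2 fun v hv => ⟨?_, e v, rfl⟩)
        simpa [← hf_center, hKr] using hf_lip.mapsTo_closedBall (e.symm x₀) r hv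

/-- lower Hausdorff-measure bound on balls of a Lipschitz graph:
`H^j(B_ρ(p) ∩ G) ≥ κ_j (ρ/√(1+M²))^j` where `κ_j` is the `H^j` measure of the
closed unit ball of `ℝ^j`. -/
theorem hausdorff_lower_bound_on_graph (n j : ℕ) (hj : j ≤ n)
    (W : Submodule ℝ (EuclideanSpace ℝ (Fin n))) (hW : Module.finrank ℝ W = j)
    (M : ℝ≥0) (g : W → Wᗮ) (hg : LipschitzWith M g)
    (p : EuclideanSpace ℝ (Fin n)) (hp : p ∈ lipGraph W g) (ρ : ℝ) (hρ : 0 < ρ) :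
    μH[(j : ℝ)] (Metric.closedBall (0 : EuclideanSpace ℝ (Fin j)) 1) *
        ENNReal.ofReal ((ρ / Real.sqrt (1 + (M : ℝ) ^ 2)) ^ j) ≤
      μH[(j : ℝ)] (Metric.closedBall p ρ ∩ lipGraph W g) :=
  hausdorff_lower_bound_on_graph_general n j W hW M g hg p hp ρ hρ

end ReifenbergPaper
end
end
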